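/- arXiv:2509.11785 — 6 statements merged into one kernel-verified Lean document; each statement's English description precedes it below -/
import Mathlib

section
/- Let ℐ : 𝒪(X) → CP(𝒜, B(ℋ)) be a unital CP instrument. Then the following are equivalent: (i) ℐ is a spectral instrument, i.e. ℐ(A) is a *-homomorphism for every A ∈ 𝒪(X); (ii) ℐ(A)(a) = φ_ℐ(a)μ_ℐ(A) = μ_ℐ(A)φ_ℐ(a) for all a ∈ 𝒜 and A ∈ 𝒪(X), where the CP marginal φ_ℐ : 𝒜 → B(ℋ) is a unital *-homomorphism and the POVM marginal μ_ℐ : 𝒪(X) → B(ℋ) is a projection-valued (spectral) measure. -/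
open scoped InnerProductSpace ComplexOrder
open Function

noncomputable section

/-- A linear map `φ : A →ₗ[ℂ] B(H)` is completely positive if for all `n`, `a : Fin n → A`
and `h : Fin n → H` one has `0 ≤ ∑ i j, ⟪h i, φ(aᵢ* aⱼ) (h j)⟫`. -/
def IsCompletelyPositive {A H : Type*} [NormedRing A] [StarRing A] [NormedAlgebra ℂ A]
    [NormedAddCommGroup H] [InnerProductSpace ℂ H]
    (φ : A →ₗ[ℂ] (H →L[ℂ] H)) : Prop :=
  ∀ (n : ℕ) (a : Fin n → A) (h : Fin n → H),
    0 ≤ ∑ i, ∑ j, (inner ℂ (h i) (φ (star (a i) * a j) (h j)) : ℂ)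

/-- A CP instrument on a measurable space `X` with values in `CP(A, B(H))`:
each `ℐ(s)` is completely positive and `s ↦ ⟪h, ℐ(s)(a) k⟫` is countably additive. -/
structure CPInstrument (X : Type*) [MeasurableSpace X] (A : Type*) (H : Type*)
    [NormedRing A] [StarRing A] [NormedAlgebra ℂ A]
    [NormedAddCommGroup H] [InnerProductSpace ℂ H] where
  toFun : Set X → A →ₗ[ℂ] (H →L[ℂ] H)
  cp : ∀ s : Set X, MeasurableSet s → IsCompletelyPositive (toFun s)
  countably_additive : ∀ (a : A) (h k : H) (s : ℕ → Set X),
    (∀ n, MeasurableSet (s n)) → Pairwise (Disjoint on s) →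
    HasSum (fun n => (inner ℂ h (toFun (s n) a k) : ℂ)) (inner ℂ h (toFun (⋃ n, s n) a k))

/-- A CP instrument is unital (normalized) if `ℐ(X)(1) = I`. -/
def CPInstrument.IsUnital {X A H : Type*} [MeasurableSpace X] [NormedRing A] [StarRing A]
    [NormedAlgebra ℂ A] [NormedAddCommGroup H] [InnerProductSpace ℂ H]
    (J : CPInstrument X A H) : Prop :=
  J.toFun Set.univ 1 = 1

/-- A projection-valued (spectral) measure on `X` acting on `K`. -/
structure IsPVM {X K : Type*} [MeasurableSpace X] [NormedAddCommGroup K]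
    [InnerProductSpace ℂ K] [CompleteSpace K] (E : Set X → K →L[ℂ] K) : Prop where
  selfAdjoint : ∀ s : Set X, MeasurableSet s → IsSelfAdjoint (E s)
  idempotent : ∀ s : Set X, MeasurableSet s → E s * E s = E s
  map_univ : E Set.univ = 1
  countably_additive : ∀ (h k : K) (s : ℕ → Set X),
    (∀ n, MeasurableSet (s n)) → Pairwise (Disjoint on s) →
    HasSum (fun n => (inner ℂ h (E (s n) k) : ℂ)) (inner ℂ h (E (⋃ n, s n) k))

/-- `(K, π, E, V)` is a minimal bi-dilation of the CP instrument `J`: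
`E` is a spectral measure commuting with the unital *-homomorphism `π`,
`J(s)(a) = V* π(a) E(s) V`, and `[π(A) E(𝒪(X)) V H] = K`. -/
structure IsMinimalBiDilation {X A H K : Type*} [MeasurableSpace X]
    [NormedRing A] [StarRing A] [NormedAlgebra ℂ A]
    [NormedAddCommGroup H] [InnerProductSpace ℂ H] [CompleteSpace H]
    [NormedAddCommGroup K] [InnerProductSpace ℂ K] [CompleteSpace K]
    (J : CPInstrument X A H) (π : A →⋆ₐ[ℂ] (K →L[ℂ] K))
    (E : Set X → K →L[ℂ] K) (V : H →L[ℂ] K) : Prop where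
  pvm : IsPVM E
  commutes : ∀ (s : Set X) (a : A), MeasurableSet s → E s * π a = π a * E s
  dilation : ∀ (s : Set X) (a : A), MeasurableSet s →
    J.toFun s a = (ContinuousLinearMap.adjoint V).comp ((π a * E s).comp V)
  minimal : (Submodule.span ℂ {y : K | ∃ (a : A) (s : Set X) (h : H),
      MeasurableSet s ∧ y = π a (E s (V h))}).topologicalClosure = ⊤

section ConvexityDefs

variable {X A H : Type*} [MeasurableSpace X] [NormedRing A] [StarRing A]
    [NormedAlgebra ℂ A] [NormedAddCommGroup H] [InnerProductSpace ℂ H] [CompleteSpace H]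

/-- `J'` is dominated by `J` if `J(s) - J'(s)` is completely positive for every measurable `s`. -/
def CPInstrument.Dominates (J J' : CPInstrument X A H) : Prop :=
  ∀ s : Set X, MeasurableSet s → IsCompletelyPositive (J.toFun s - J'.toFun s)

/-- A CP instrument is pure if every CP instrument it dominates is of the form `t • J`
for some `t ∈ [0,1]`. -/
def CPInstrument.IsPure (J : CPInstrument X A H) : Prop :=
  ∀ J' : CPInstrument X A H, J.Dominates J' →
    ∃ t : ℝ, 0 ≤ t ∧ t ≤ 1 ∧ ∀ s : Set X, MeasurableSet s → J'.toFun s = (t : ℂ) • J.toFun s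

/-- Extreme point of the convex set `I_H(X, A)` of unital CP instruments. -/
def CPInstrument.IsExtreme (J : CPInstrument X A H) : Prop :=
  J.IsUnital ∧ ∀ (J₁ J₂ : CPInstrument X A H) (t : ℝ), J₁.IsUnital → J₂.IsUnital →
    0 < t → t < 1 →
    (∀ s : Set X, MeasurableSet s →
      J.toFun s = (t : ℂ) • J₁.toFun s + ((1 - t : ℝ) : ℂ) • J₂.toFun s) →
    ∀ s : Set X, MeasurableSet s → J₁.toFun s = J.toFun s ∧ J₂.toFun s = J.toFun s

/-- C*-extreme point of the set `I_H(X, A)` of unital CP instruments: every proper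
C*-convex combination representing `J` consists of instruments unitarily equivalent to `J`. -/
def CPInstrument.IsCstarExtreme (J : CPInstrument X A H) : Prop :=
  J.IsUnital ∧ ∀ (n : ℕ) (Js : Fin n → CPInstrument X A H) (T : Fin n → H →L[ℂ] H),
    (∀ i, (Js i).IsUnital) → (∀ i, IsUnit (T i)) →
    (∑ i, ContinuousLinearMap.adjoint (T i) * T i) = 1 →
    (∀ (s : Set X) (a : A), MeasurableSet s →
      J.toFun s a = ∑ i, ContinuousLinearMap.adjoint (T i) * ((Js i).toFun s a) * T i) →
    ∀ i, ∃ U : H →L[ℂ] H,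
      ContinuousLinearMap.adjoint U * U = 1 ∧ U * ContinuousLinearMap.adjoint U = 1 ∧
      ∀ (s : Set X) (a : A), MeasurableSet s →
        (Js i).toFun s a = ContinuousLinearMap.adjoint U * (J.toFun s a) * U

end ConvexityDefs

/-!
If every `ℐ(s)` is multiplicative, `P s := ℐ(s)(1)` is an idempotent absorbing `ℐ(s)(a)` on both
sides, and additivity with unitality gives `P s + P sᶜ = 1`, so `P s` annihilates `ℐ(sᶜ)(a)`;
hence `ℐ(X)(a) P s = (ℐ(s)(a) + ℐ(sᶜ)(a)) P s = ℐ(s)(a)`, and likewise on the left.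
Conversely, compressing a *-homomorphism by a self-adjoint idempotent in its commutant
yields a *-homomorphism.
-/

section MultiplicativeMaps

variable {R S : Type*}

theorem isIdempotentElem_map_one_of_map_mul [MulOneClass R] [Mul S] {f : R → S}
    (hf : ∀ a b, f (a * b) = f a * f b) : IsIdempotentElem (f 1) := by
  simpa [IsIdempotentElem] using (hf 1 1).symm

theorem isSelfAdjoint_map_one_of_map_star [MulOneClass R] [StarMul R] [Star S] {f : R → S}
    (hf : ∀ a, f (star a) = star (f a)) : IsSelfAdjoint (f 1) := by
  simpa [IsSelfAdjoint] using (hf 1).symm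

theorem map_mul_map_one_of_map_mul [MulOneClass R] [Mul S] {f : R → S}
    (hf : ∀ a b, f (a * b) = f a * f b) (a : R) : f a * f 1 = f a := by
  rw [← hf, mul_one]

theorem map_one_mul_map_of_map_mul [MulOneClass R] [Mul S] {f : R → S}
    (hf : ∀ a b, f (a * b) = f a * f b) (a : R) : f 1 * f a = f a := by
  rw [← hf, one_mul]

theorem map_mul_mul_of_commute [Mul R] [Semigroup S] {f : R → S}
    (hf : ∀ a b, f (a * b) = f a * f b) {p : S} (hp : IsIdempotentElem p)
    (hcomm : ∀ a, Commute p (f a)) (a b : R) : f (a * b) * p = f a * p * (f b * p) := by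
  rw [hf, mul_assoc (f a) p, ← mul_assoc p, (hcomm b).eq, mul_assoc (f b), hp.eq, mul_assoc]

theorem map_star_mul_of_commute [Star R] [Monoid S] [StarMul S] {f : R → S}
    (hf : ∀ a, f (star a) = star (f a)) {p : S} (hp : IsSelfAdjoint p)
    (hcomm : ∀ a, Commute p (f a)) (a : R) : f (star a) * p = star (f a * p) := by
  rw [star_mul, hp.star_eq, ← hf, (hcomm (star a)).eq]

end MultiplicativeMaps

theorem IsIdempotentElem.add_mul_eq_of_add_eq_one {S : Type*} [Ring S] {p q y z : S}
    (hp : IsIdempotentElem p) (hpq : p + q = 1) (hy : y * p = y) (hz : z * q = z) :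
    (y + z) * p = y := by
  obtain rfl : q = 1 - p := eq_sub_of_add_eq' hpq
  rw [add_mul, ← hz, mul_assoc, hp.one_sub_mul_self, mul_zero, add_zero, hy]

theorem IsIdempotentElem.mul_add_eq_of_add_eq_one {S : Type*} [Ring S] {p q y z : S}
    (hp : IsIdempotentElem p) (hpq : p + q = 1) (hy : p * y = y) (hz : q * z = z) :
    p * (y + z) = y := by
  obtain rfl : q = 1 - p := eq_sub_of_add_eq' hpq
  rw [mul_add, ← hz, ← mul_assoc, hp.mul_one_sub_self, zero_mul, add_zero, hy]

namespace CPInstrument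

open MeasureTheory

variable {X A H : Type*} [MeasurableSpace X] [NormedRing A] [StarRing A] [NormedAlgebra ℂ A]
  [NormedAddCommGroup H] [InnerProductSpace ℂ H]

theorem inner_toFun_empty (J : CPInstrument X A H) (a : A) (h k : H) :
    ⟪h, J.toFun ∅ a k⟫_ℂ = 0 := by
  have hsum := J.countably_additive a h k (fun _ => ∅) (fun _ => .empty)
    (fun _ _ _ => disjoint_bot_left)
  rw [Set.iUnion_empty] at hsum
  exact (summable_const_iff _).mp hsum.summable

open Classical in
def toVectorMeasure (J : CPInstrument X A H) (a : A) (h k : H) : VectorMeasure X ℂ where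
  measureOf' s := if MeasurableSet s then ⟪h, J.toFun s a k⟫_ℂ else 0
  empty' := by simp [inner_toFun_empty]
  not_measurable' _ hs := if_neg hs
  m_iUnion' s hs hdisj := by
    simpa [hs, MeasurableSet.iUnion hs] using J.countably_additive a h k s hs hdisj

theorem toVectorMeasure_apply (J : CPInstrument X A H) (a : A) (h k : H) {s : Set X}
    (hs : MeasurableSet s) : J.toVectorMeasure a h k s = ⟪h, J.toFun s a k⟫_ℂ := by
  simp [toVectorMeasure, hs]

theorem toFun_union (J : CPInstrument X A H) {s t : Set X} (hs : MeasurableSet s)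
    (ht : MeasurableSet t) (hst : Disjoint s t) : J.toFun (s ∪ t) = J.toFun s + J.toFun t :=
  LinearMap.ext fun a => ContinuousLinearMap.ext fun k => ext_inner_left ℂ fun h => by
    simpa [toVectorMeasure_apply, hs, ht, hs.union ht, inner_add_right] using
      (J.toVectorMeasure a h k).of_union hst hs ht

theorem toFun_add_toFun_compl (J : CPInstrument X A H) {s : Set X} (hs : MeasurableSet s) :
    J.toFun s + J.toFun sᶜ = J.toFun Set.univ := by
  rw [← J.toFun_union hs hs.compl disjoint_compl_right, Set.union_compl_self]

theorem toFun_eq_toFun_univ_mul_of_map_mul (J : CPInstrument X A H) (hJ : J.IsUnital)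
    (hmul : ∀ s, MeasurableSet s → ∀ a b, J.toFun s (a * b) = J.toFun s a * J.toFun s b)
    {s : Set X} (hs : MeasurableSet s) (a : A) :
    J.toFun s a = J.toFun Set.univ a * J.toFun s 1 ∧
      J.toFun s a = J.toFun s 1 * J.toFun Set.univ a := by
  have hsplit (b : A) : J.toFun s b + J.toFun sᶜ b = J.toFun Set.univ b := by
    rw [← J.toFun_add_toFun_compl hs, LinearMap.add_apply]
  have hidem : IsIdempotentElem (J.toFun s 1) := isIdempotentElem_map_one_of_map_mul (hmul s hs)
  have hone : J.toFun s 1 + J.toFun sᶜ 1 = 1 := hsplit 1 ▸ hJ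
  rw [← hsplit a]
  exact ⟨(hidem.add_mul_eq_of_add_eq_one hone (map_mul_map_one_of_map_mul (hmul s hs) a)
      (map_mul_map_one_of_map_mul (hmul sᶜ hs.compl) a)).symm,
    (hidem.mul_add_eq_of_add_eq_one hone (map_one_mul_map_of_map_mul (hmul s hs) a)
      (map_one_mul_map_of_map_mul (hmul sᶜ hs.compl) a)).symm⟩

end CPInstrument

theorem CPInstrument.spectral_iff_product_of_marginals_general
    {X A H : Type*} [MeasurableSpace X]
    [NormedRing A] [StarRing A] [NormedAlgebra ℂ A]
    [NormedAddCommGroup H] [InnerProductSpace ℂ H] [CompleteSpace H]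
    (J : CPInstrument X A H) (hJ : J.IsUnital) :
    (∀ s : Set X, MeasurableSet s →
        (∀ a b : A, J.toFun s (a * b) = J.toFun s a * J.toFun s b) ∧
        (∀ a : A, J.toFun s (star a) = star (J.toFun s a)))
    ↔
    ((∀ a b : A, J.toFun Set.univ (a * b) = J.toFun Set.univ a * J.toFun Set.univ b) ∧
     (∀ a : A, J.toFun Set.univ (star a) = star (J.toFun Set.univ a)) ∧
     J.toFun Set.univ 1 = 1 ∧
     (∀ s : Set X, MeasurableSet s → IsSelfAdjoint (J.toFun s 1) ∧
        (J.toFun s 1) * (J.toFun s 1) = J.toFun s 1) ∧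
     (∀ (s : Set X) (a : A), MeasurableSet s →
        J.toFun s a = J.toFun Set.univ a * J.toFun s 1 ∧
        J.toFun s a = J.toFun s 1 * J.toFun Set.univ a)) := by
  constructor
  · intro hspec
    have hmul s hs := (hspec s hs).1
    exact ⟨hmul _ .univ, (hspec _ .univ).2, hJ,
      fun s hs => ⟨isSelfAdjoint_map_one_of_map_star (hspec s hs).2,
        isIdempotentElem_map_one_of_map_mul (hmul s hs)⟩,
      fun s a hs => J.toFun_eq_toFun_univ_mul_of_map_mul hJ hmul hs a⟩
  · rintro ⟨hmul, hstar, -, hproj, hfact⟩ s hs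
    have hcomm a : Commute (J.toFun s 1) (J.toFun Set.univ a) :=
      (hfact s a hs).2.symm.trans (hfact s a hs).1
    refine ⟨fun a b => ?_, fun a => ?_⟩
    · rw [(hfact s _ hs).1, (hfact s a hs).1, (hfact s b hs).1]
      exact map_mul_mul_of_commute hmul (hproj s hs).2 hcomm a b
    · rw [(hfact s _ hs).1, (hfact s a hs).1]
      exact map_star_mul_of_commute hstar (hproj s hs).1 hcomm a

/-- **Characterization of spectral instruments.** A unital CP instrument `ℐ` is spectral
(every `ℐ(A)` is a *-homomorphism) iff it is the product of its marginals
`ℐ(A)(a) = φ_ℐ(a) μ_ℐ(A) = μ_ℐ(A) φ_ℐ(a)`, with `φ_ℐ` a unital *-homomorphism and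
`μ_ℐ` a projection-valued measure. -/
theorem CPInstrument.spectral_iff_product_of_marginals
    {X A H : Type*} [MeasurableSpace X]
    [NormedRing A] [StarRing A] [CStarRing A] [NormedAlgebra ℂ A] [StarModule ℂ A]
    [CompleteSpace A] [NormedAddCommGroup H] [InnerProductSpace ℂ H] [CompleteSpace H]
    (J : CPInstrument X A H) (hJ : J.IsUnital) :
    (∀ s : Set X, MeasurableSet s →
        (∀ a b : A, J.toFun s (a * b) = J.toFun s a * J.toFun s b) ∧
        (∀ a : A, J.toFun s (star a) = star (J.toFun s a)))
    ↔
    ((∀ a b : A, J.toFun Set.univ (a * b) = J.toFun Set.univ a * J.toFun Set.univ b) ∧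
     (∀ a : A, J.toFun Set.univ (star a) = star (J.toFun Set.univ a)) ∧
     J.toFun Set.univ 1 = 1 ∧
     (∀ s : Set X, MeasurableSet s → IsSelfAdjoint (J.toFun s 1) ∧
        (J.toFun s 1) * (J.toFun s 1) = J.toFun s 1) ∧
     (∀ (s : Set X) (a : A), MeasurableSet s →
        J.toFun s a = J.toFun Set.univ a * J.toFun s 1 ∧
        J.toFun s a = J.toFun s 1 * J.toFun Set.univ a)) :=
  CPInstrument.spectral_iff_product_of_marginals_general J hJ
end
end

section
/- Let ℐ : 𝒪(X) → CP(𝒜, B(ℋ)) be a CP instrument with minimal bi-dilation quadruple (𝒦, π, E, V). Then for any A ∈ 𝒪(X), ℐ(A) = 0 if and only if π(a)E(A) = 0 for all a ∈ 𝒜 (equivalently, E(A) = 0). In particular, for S ∈ 𝒪(X), ℐ is concentrated on S (i.e. ℐ(A) = ℐ(A ∩ S) for all A ∈ 𝒪(X)) if and only if the spectral instrument πE is concentrated on S (i.e. π(a)E(A) = π(a)E(A ∩ S) for all a ∈ 𝒜, A ∈ 𝒪(X)). -/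
open scoped InnerProductSpace ComplexOrder
open Function

noncomputable section

/-!
Since `⟪h, ℐ(s)(1) h⟫ = ‖E(s) V h‖²`, the vanishing of `ℐ(s)` forces `E(s) V = 0`. As `E(s)`
commutes with `π(𝒜)` and with every `E(t)`, the operator `π(a) E(s)` then kills every generator
`π(b) E(t) V h` of `𝒦`, so it vanishes by minimality. Concentration on `S` reduces to this
vanishing statement for `s \ S`, because `E(s) = E(s ∩ S) + E(s \ S)`.
-/

namespace MeasureTheory.VectorMeasure

variable {X M : Type*} [MeasurableSpace X] [AddCommGroup M] [TopologicalSpace M]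
  [IsTopologicalAddGroup M] [T2Space M]

theorem apply_empty_of_hasSum_iUnion {f : Set X → M}
    (hf : ∀ s : ℕ → Set X, (∀ n, MeasurableSet (s n)) → Pairwise (Disjoint on s) →
      HasSum (fun n => f (s n)) (f (⋃ n, s n))) :
    f ∅ = 0 := by
  have h := hf (fun _ => ∅) (fun _ => .empty) (fun _ _ _ => disjoint_bot_left)
  rw [Set.iUnion_empty] at h
  exact tendsto_nhds_unique tendsto_const_nhds h.summable.tendsto_atTop_zero

open Classical in
def ofHasSumIUnion (f : Set X → M)
    (hf : ∀ s : ℕ → Set X, (∀ n, MeasurableSet (s n)) → Pairwise (Disjoint on s) →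
      HasSum (fun n => f (s n)) (f (⋃ n, s n))) :
    VectorMeasure X M where
  measureOf' s := if MeasurableSet s then f s else 0
  empty' := by simp [apply_empty_of_hasSum_iUnion hf]
  not_measurable' _ hs := if_neg hs
  m_iUnion' s hs hd := by simpa [hs, MeasurableSet.iUnion hs] using hf s hs hd

theorem ofHasSumIUnion_apply {f : Set X → M}
    (hf : ∀ s : ℕ → Set X, (∀ n, MeasurableSet (s n)) → Pairwise (Disjoint on s) →
      HasSum (fun n => f (s n)) (f (⋃ n, s n)))
    {s : Set X} (hs : MeasurableSet s) :
    ofHasSumIUnion f hf s = f s :=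
  if_pos hs

end MeasureTheory.VectorMeasure

namespace IsPVM

open MeasureTheory

variable {X K : Type*} [MeasurableSpace X] [NormedAddCommGroup K] [InnerProductSpace ℂ K]
  [CompleteSpace K] {E : Set X → K →L[ℂ] K} {s t : Set X}

theorem apply_empty (hE : IsPVM E) : E ∅ = 0 := by
  ext k
  refine ext_inner_left ℂ fun h => ?_
  rw [zero_apply, inner_zero_right]
  exact VectorMeasure.apply_empty_of_hasSum_iUnion (f := fun u => ⟪h, E u k⟫_ℂ)
    (hE.countably_additive h k)

theorem apply_union (hE : IsPVM E) (hs : MeasurableSet s) (ht : MeasurableSet t)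
    (hst : Disjoint s t) : E (s ∪ t) = E s + E t := by
  ext k
  refine ext_inner_left ℂ fun h => ?_
  let μ := VectorMeasure.ofHasSumIUnion (fun u => ⟪h, E u k⟫_ℂ) (hE.countably_additive h k)
  have hμ {u : Set X} (hu : MeasurableSet u) : μ u = ⟪h, E u k⟫_ℂ :=
    VectorMeasure.ofHasSumIUnion_apply _ hu
  rw [add_apply, inner_add_right, ← hμ hs, ← hμ ht, ← hμ (hs.union ht),
    VectorMeasure.of_union hst hs ht]

theorem apply_eq_inter_add_diff (hE : IsPVM E) (hs : MeasurableSet s) (ht : MeasurableSet t) :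
    E s = E (s ∩ t) + E (s \ t) := by
  rw [← hE.apply_union (hs.inter ht) (hs.diff ht) (Set.disjoint_sdiff_inter.symm),
    Set.inter_union_sdiff]

theorem isIdempotentElem (hE : IsPVM E) (hs : MeasurableSet s) : IsIdempotentElem (E s) :=
  hE.idempotent s hs

theorem mul_eq_zero_of_disjoint (hE : IsPVM E) (hs : MeasurableSet s) (ht : MeasurableSet t)
    (hst : Disjoint s t) : E s * E t = 0 := by
  have := IsAddTorsionFree.of_isTorsionFree ℂ (K →L[ℂ] K)
  have hunion := hE.isIdempotentElem (hs.union ht)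
  rw [hE.apply_union hs ht hst] at hunion
  exact (hE.isIdempotentElem hs).mul_eq_zero_of_anticommute
    (((hE.isIdempotentElem hs).add_iff (hE.isIdempotentElem ht)).mp hunion)

theorem mul_apply (hE : IsPVM E) (hs : MeasurableSet s) (ht : MeasurableSet t) :
    E s * E t = E (s ∩ t) := by
  have hst := hs.inter ht
  rw [hE.apply_eq_inter_add_diff hs ht, hE.apply_eq_inter_add_diff ht hs, Set.inter_comm t s,
    add_mul, mul_add, mul_add, (hE.isIdempotentElem hst).eq,
    hE.mul_eq_zero_of_disjoint hst (ht.diff hs)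
      (Set.disjoint_sdiff_right.mono_left Set.inter_subset_left),
    hE.mul_eq_zero_of_disjoint (hs.diff ht) hst
      (Set.disjoint_sdiff_left.mono_right Set.inter_subset_right),
    hE.mul_eq_zero_of_disjoint (hs.diff ht) (ht.diff hs)
      (Set.disjoint_sdiff_left.mono_right Set.sdiff_subset),
    add_zero, add_zero, add_zero]

theorem commute (hE : IsPVM E) (hs : MeasurableSet s) (ht : MeasurableSet t) :
    Commute (E s) (E t) := by
  rw [Commute, SemiconjBy, hE.mul_apply hs ht, hE.mul_apply ht hs, Set.inter_comm]

theorem inner_apply_self (hE : IsPVM E) (hs : MeasurableSet s) (x : K) :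
    ⟪x, E s x⟫_ℂ = ⟪E s x, E s x⟫_ℂ := by
  rw [← ContinuousLinearMap.adjoint_inner_right, ← ContinuousLinearMap.star_eq_adjoint,
    (hE.selfAdjoint s hs).star_eq, ← mul_apply_eq_comp, hE.idempotent s hs]

end IsPVM

namespace IsMinimalBiDilation

variable {X A H K : Type*} [MeasurableSpace X] [NormedRing A] [StarRing A] [NormedAlgebra ℂ A]
  [NormedAddCommGroup H] [InnerProductSpace ℂ H] [CompleteSpace H]
  [NormedAddCommGroup K] [InnerProductSpace ℂ K] [CompleteSpace K]
  {J : CPInstrument X A H} {π : A →⋆ₐ[ℂ] (K →L[ℂ] K)} {E : Set X → K →L[ℂ] K} {V : H →L[ℂ] K}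
  {s : Set X}

theorem inner_toFun_one_self (hd : IsMinimalBiDilation J π E V) (hs : MeasurableSet s)
    (h : H) : ⟪h, J.toFun s 1 h⟫_ℂ = ⟪E s (V h), E s (V h)⟫_ℂ := by
  rw [hd.dilation s 1 hs, map_one, one_mul, ContinuousLinearMap.comp_apply,
    ContinuousLinearMap.adjoint_inner_right, ContinuousLinearMap.comp_apply,
    hd.pvm.inner_apply_self hs]

theorem eq_zero_of_forall_apply_generator (hd : IsMinimalBiDilation J π E V) {T : K →L[ℂ] K}
    (hT : ∀ (a : A) (s : Set X) (h : H), MeasurableSet s → T (π a (E s (V h))) = 0) :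
    T = 0 := by
  have hspan : Submodule.span ℂ {y : K | ∃ (a : A) (s : Set X) (h : H),
      MeasurableSet s ∧ y = π a (E s (V h))} ≤ LinearMap.ker (T : K →ₗ[ℂ] K) :=
    Submodule.span_le.mpr fun _ ⟨a, s, h, hs, hy⟩ => hy ▸ hT a s h hs
  have hker := Submodule.topologicalClosure_minimal _ hspan T.isClosed_ker
  rw [hd.minimal, top_le_iff, LinearMap.ker_eq_top] at hker
  exact ContinuousLinearMap.coe_injective hker

theorem toFun_eq_zero_iff (hd : IsMinimalBiDilation J π E V) (hs : MeasurableSet s) :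
    J.toFun s = 0 ↔ ∀ a : A, π a * E s = 0 := by
  refine ⟨fun hJ a => ?_, fun hπE => ?_⟩
  · have hEV (h : H) : E s (V h) = 0 := by
      rw [← inner_self_eq_zero (𝕜 := ℂ), ← hd.inner_toFun_one_self hs, hJ]
      simp
    refine hd.eq_zero_of_forall_apply_generator fun b t h ht => ?_
    have hcomm : E s * (π b * E t) = π b * E t * E s := by
      rw [← mul_assoc, hd.commutes s b hs, mul_assoc, (hd.pvm.commute hs ht).eq, mul_assoc]
    calc (π a * E s) (π b (E t (V h))) = (π a * (E s * (π b * E t))) (V h) := rfl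
      _ = (π a * (π b * E t)) (E s (V h)) := by rw [hcomm]; rfl
      _ = 0 := by rw [hEV, map_zero]
  · ext1 a
    rw [hd.dilation s a hs, hπE a]
    simp

end IsMinimalBiDilation

theorem CPInstrument.vanishes_iff_dilation_vanishes_general
    {X A H K : Type*} [MeasurableSpace X]
    [NormedRing A] [StarRing A] [NormedAlgebra ℂ A]
    [NormedAddCommGroup H] [InnerProductSpace ℂ H] [CompleteSpace H]
    [NormedAddCommGroup K] [InnerProductSpace ℂ K] [CompleteSpace K]
    (J : CPInstrument X A H) (π : A →⋆ₐ[ℂ] (K →L[ℂ] K))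
    (E : Set X → K →L[ℂ] K) (V : H →L[ℂ] K)
    (hdil : IsMinimalBiDilation J π E V)
    (S : Set X) (hS : MeasurableSet S) :
    (∀ s : Set X, MeasurableSet s →
      (J.toFun s = 0 ↔ ∀ a : A, π a * E s = 0)) ∧
    ((∀ s : Set X, MeasurableSet s → J.toFun s = J.toFun (s ∩ S)) ↔
      (∀ (s : Set X) (a : A), MeasurableSet s → π a * E s = π a * E (s ∩ S))) := by
  refine ⟨fun s hs => hdil.toFun_eq_zero_iff hs, ⟨fun hJ s a hs => ?_, fun hπE s hs => ?_⟩⟩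
  · have hJ_diff : J.toFun (s \ S) = 0 := by
      rw [hJ _ (hs.diff hS), Set.sdiff_inter_self, hdil.toFun_eq_zero_iff .empty,
        hdil.pvm.apply_empty]
      simp
    rw [hdil.pvm.apply_eq_inter_add_diff hs hS, mul_add,
      (hdil.toFun_eq_zero_iff (hs.diff hS)).mp hJ_diff a, add_zero]
  · ext1 a
    rw [hdil.dilation s a hs, hdil.dilation _ a (hs.inter hS), hπE s a hs]

/-- For a CP instrument with minimal bi-dilation `(𝒦, π, E, V)`: `ℐ(A) = 0` iff
`π(a)E(A) = 0` for all `a`; in particular `ℐ` is concentrated on a measurable set `S`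
iff the spectral instrument `πE` is concentrated on `S`. -/
theorem CPInstrument.vanishes_iff_dilation_vanishes
    {X A H K : Type*} [MeasurableSpace X]
    [NormedRing A] [StarRing A] [CStarRing A] [NormedAlgebra ℂ A] [StarModule ℂ A]
    [CompleteSpace A] [NormedAddCommGroup H] [InnerProductSpace ℂ H] [CompleteSpace H]
    [NormedAddCommGroup K] [InnerProductSpace ℂ K] [CompleteSpace K]
    (J : CPInstrument X A H) (π : A →⋆ₐ[ℂ] (K →L[ℂ] K))
    (E : Set X → K →L[ℂ] K) (V : H →L[ℂ] K)
    (hdil : IsMinimalBiDilation J π E V)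
    (S : Set X) (hS : MeasurableSet S) :
    (∀ s : Set X, MeasurableSet s →
      (J.toFun s = 0 ↔ ∀ a : A, π a * E s = 0)) ∧
    ((∀ s : Set X, MeasurableSet s → J.toFun s = J.toFun (s ∩ S)) ↔
      (∀ (s : Set X) (a : A), MeasurableSet s → π a * E s = π a * E (s ∩ S))) :=
  CPInstrument.vanishes_iff_dilation_vanishes_general J π E V hdil S hS
end
end

section
/- Let ℐ : 𝒪(X) → CP(𝒜, B(ℋ)) be a CP instrument with minimal bi-dilation quadruple (𝒦, π, E, V). Then ℐ is pure (i.e. every CP instrument 𝒥 : 𝒪(X) → CP(𝒜, B(ℋ)) dominated by ℐ is of the form 𝒥 = tℐ for some t ∈ [0,1]) if and only if the spectral instrument πE is irreducible, i.e. {π(a)E(A) : a ∈ 𝒜, A ∈ 𝒪(X)}′ = ℂ·I_𝒦. -/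
open scoped InnerProductSpace ComplexOrder
open Function

noncomputable section

/-!
A CP instrument `𝒥` dominated by `ℐ` gives a positive sesquilinear form on formal combinations
of the vectors `π(a)E(s)Vh`, dominated by the form of `ℐ`, which is the inner product of `𝒦`.
As these vectors are total, it is represented by an operator `0 ≤ T ≤ 1`; it commutes with `π`
and `E`, and `𝒥(s)(a) = V*π(a)E(s)TV` (Radon–Nikodym). Conversely each such `T` yields an
instrument dominated by `ℐ`, and `T` is determined by it by minimality. So `ℐ` is pure iff every
positive contraction in the commutant of `πE` is scalar. The commutant is a C*-algebra, since
`{π(a)E(s)}` is self-adjoint, so this holds iff the whole commutant is `ℂ·1`: every element is a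
combination of self-adjoint ones, and a self-adjoint `x` is an affine function of the positive
contraction `(2c)⁻¹(c + x)`, `c = ‖x‖ + 1`.
-/

open scoped ComplexConjugate

namespace Finsupp

variable {ι : Type*}

def sesqForm (κ : ι → ι → ℂ) : (ι →₀ ℂ) →ₗ⋆[ℂ] (ι →₀ ℂ) →ₗ[ℂ] ℂ :=
  Finsupp.lsum ℕ fun q =>
    (LinearMap.toSpanSingleton ℂ _ (Finsupp.linearCombination ℂ (κ q))).comp
      (starLinearEquiv ℂ : ℂ ≃ₗ⋆[ℂ] ℂ).toLinearMap

theorem sesqForm_apply (κ : ι → ι → ℂ) (x y : ι →₀ ℂ) :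
    sesqForm κ x y = x.sum fun q c => y.sum fun p d => conj c * d * κ q p := by
  simp [sesqForm, linearCombination_apply, Finsupp.sum, Finset.mul_sum, mul_assoc]

@[simp]
theorem sesqForm_single_single (κ : ι → ι → ℂ) (q p : ι) :
    sesqForm κ (single q 1) (single p 1) = κ q p := by
  simp [sesqForm_apply]

theorem sesqForm_sub (κ₁ κ₂ : ι → ι → ℂ) (x y : ι →₀ ℂ) :
    sesqForm (κ₁ - κ₂) x y = sesqForm κ₁ x y - sesqForm κ₂ x y := by
  simp [sesqForm_apply, mul_sub, sum_sub]

theorem sesqForm_inner {K : Type*} [NormedAddCommGroup K] [InnerProductSpace ℂ K]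
    (u w : ι → K) (x y : ι →₀ ℂ) :
    sesqForm (fun q p => ⟪u q, w p⟫_ℂ) x y
      = ⟪linearCombination ℂ u x, linearCombination ℂ w y⟫_ℂ := by
  simp only [sesqForm_apply, linearCombination_apply, Finsupp.sum, sum_inner, inner_sum,
    inner_smul_left, inner_smul_right, Finset.mul_sum]
  rw [Finset.sum_comm]
  exact Finset.sum_congr rfl fun _ _ => Finset.sum_congr rfl fun _ _ => by ring

end Finsupp

section PositiveForm

variable {M : Type*} [AddCommGroup M] [Module ℂ M]

theorem LinearMap.isSymm_of_forall_nonneg (B : M →ₗ⋆[ℂ] M →ₗ[ℂ] ℂ) (hB : ∀ x, 0 ≤ B x x) :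
    B.IsSymm := by
  refine ⟨fun x y => ?_⟩
  have him : ∀ z, (B z z).im = 0 := fun z => ((Complex.nonneg_iff.1 (hB z)).2).symm
  have e1 : B (x + y) (x + y) = B x x + B y y + (B x y + B y x) := by
    simp only [map_add, add_apply]
    ring
  have e2 : B (x + Complex.I • y) (x + Complex.I • y)
      = B x x + B y y + Complex.I * (B x y - B y x) := by
    simp only [map_add, LinearMap.map_smulₛₗ, Complex.conj_I, neg_smul, add_apply, map_smul,
      smul_eq_mul, neg_apply, smul_apply]
    linear_combination (-B y y) * Complex.I_sq
  have h1 := him (x + y)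
  have h2 := him (x + Complex.I • y)
  rw [e1] at h1
  rw [e2] at h2
  simp only [Complex.add_im, Complex.mul_im, Complex.I_re, Complex.I_im, Complex.sub_re,
    him x, him y] at h1 h2
  apply Complex.ext
  · rw [Complex.conj_re]
    linarith
  · rw [Complex.conj_im]
    linarith

theorem LinearMap.norm_apply_sq_le_of_forall_nonneg (B : M →ₗ⋆[ℂ] M →ₗ[ℂ] ℂ)
    (hB : ∀ x, 0 ≤ B x x) (x y : M) : ‖B x y‖ ^ 2 ≤ (B x x).re * (B y y).re := by
  -- Cauchy–Schwarz for `B`, used as the inner product of a pre-inner-product space on `M`.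
  let _ : PreInnerProductSpace.Core ℂ M :=
    { inner := fun x y => B x y
      conj_inner_symm := fun x y => (B.isSymm_of_forall_nonneg hB).eq y x
      re_inner_nonneg := fun x => (Complex.nonneg_iff.1 (hB x)).1
      add_left := fun x y z => by simp
      smul_left := fun x y r => by simp }
  have h : ‖B x y‖ * ‖B y x‖ ≤ (B x x).re * (B y y).re :=
    InnerProductSpace.Core.inner_mul_inner_self_le (𝕜 := ℂ) x y
  rwa [← (B.isSymm_of_forall_nonneg hB).eq x y, RCLike.norm_conj, ← sq] at h

end PositiveForm

section DenseRange

variable {M K : Type*} [AddCommGroup M] [Module ℂ M]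
  [NormedAddCommGroup K] [InnerProductSpace ℂ K] {Φ : M →ₗ[ℂ] K}

theorem ContinuousLinearMap.ext_of_denseRange_inner (hΦ : DenseRange Φ) {W₁ W₂ : K →L[ℂ] K}
    (h : ∀ x y, ⟪Φ x, W₁ (Φ y)⟫_ℂ = ⟪Φ x, W₂ (Φ y)⟫_ℂ) : W₁ = W₂ := by
  ext z
  refine ext_inner_left ℂ fun w => ?_
  induction w, z using hΦ.induction_on₂ with
  | hp => exact isClosed_eq (by fun_prop) (by fun_prop)
  | h x y => exact h x y

theorem ContinuousLinearMap.nonneg_of_denseRange_inner (hΦ : DenseRange Φ) {T : K →L[ℂ] K}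
    (h : ∀ x, 0 ≤ ⟪Φ x, T (Φ x)⟫_ℂ) : 0 ≤ T := by
  rw [ContinuousLinearMap.nonneg_iff_isPositive, ContinuousLinearMap.isPositive_iff_complex]
  intro z
  have hz : 0 ≤ ⟪z, T z⟫_ℂ :=
    hΦ.induction_on z (isClosed_le continuous_const (by fun_prop)) h
  have hreal : conj ⟪z, T z⟫_ℂ = ⟪z, T z⟫_ℂ := (IsSelfAdjoint.of_nonneg hz).star_eq
  rw [← inner_conj_symm, hreal]
  exact ⟨Complex.conj_eq_iff_re.1 hreal, (Complex.nonneg_iff.1 hz).1⟩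

variable [CompleteSpace K]

theorem exists_inner_map_eq_of_norm_le (hΦ : DenseRange Φ) (B : M →ₗ⋆[ℂ] M →ₗ[ℂ] ℂ)
    (hB : ∀ x y, ‖B x y‖ ≤ ‖Φ x‖ * ‖Φ y‖) :
    ∃ T : K →L[ℂ] K, ∀ x y, ⟪Φ x, T (Φ y)⟫_ℂ = B x y := by
  have hbd : ∀ x, ∃ C, ∀ y, ‖B x y‖ ≤ C * ‖Φ y‖ := fun x => ⟨_, hB x⟩
  let R : M →ₗ⋆[ℂ] (K →L[ℂ] ℂ) :=
    { toFun := fun x => (B x).extendOfNorm Φ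
      map_add' := fun x x' => LinearMap.extendOfNorm_unique hΦ _ (hB (x + x')) _ (by
        ext y; simp [LinearMap.extendOfNorm_eq hΦ (hbd _)])
      map_smul' := fun c x => LinearMap.extendOfNorm_unique hΦ _ (hB (c • x)) _ (by
        ext y; simp [LinearMap.extendOfNorm_eq hΦ (hbd _)]) }
  have hR : ∀ x, ‖R x‖ ≤ 1 * ‖Φ x‖ := fun x => by
    rw [one_mul]; exact LinearMap.opNorm_extendOfNorm_le hΦ (norm_nonneg _) (hB x)
  refine ⟨ContinuousLinearMap.adjoint
    (InnerProductSpace.continuousLinearMapOfBilin (R.extendOfNorm Φ)), fun x y => ?_⟩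
  rw [ContinuousLinearMap.adjoint_inner_right,
    InnerProductSpace.continuousLinearMapOfBilin_apply,
    LinearMap.extendOfNorm_eq hΦ ⟨1, hR⟩]
  exact LinearMap.extendOfNorm_eq hΦ (hbd x) y

theorem exists_nonneg_le_one_inner_map_eq (hΦ : DenseRange Φ) (B : M →ₗ⋆[ℂ] M →ₗ[ℂ] ℂ)
    (hB₀ : ∀ x, 0 ≤ B x x) (hB₁ : ∀ x, B x x ≤ ⟪Φ x, Φ x⟫_ℂ) :
    ∃ T : K →L[ℂ] K, 0 ≤ T ∧ T ≤ 1 ∧ ∀ x y, ⟪Φ x, T (Φ y)⟫_ℂ = B x y := by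
  have hre : ∀ x, (B x x).re ≤ ‖Φ x‖ ^ 2 := fun x => by
    simpa [← inner_self_eq_norm_sq (𝕜 := ℂ)] using (Complex.le_def.1 (hB₁ x)).1
  obtain ⟨T, hT⟩ := exists_inner_map_eq_of_norm_le hΦ B fun x y => by
    refine (pow_le_pow_iff_left₀ (norm_nonneg _) (by positivity) two_ne_zero).1 ?_
    calc ‖B x y‖ ^ 2 ≤ (B x x).re * (B y y).re :=
          B.norm_apply_sq_le_of_forall_nonneg hB₀ x y
      _ ≤ ‖Φ x‖ ^ 2 * ‖Φ y‖ ^ 2 :=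
        mul_le_mul (hre x) (hre y) (Complex.nonneg_iff.1 (hB₀ y)).1 (by positivity)
      _ = (‖Φ x‖ * ‖Φ y‖) ^ 2 := (mul_pow _ _ _).symm
  refine ⟨T, ContinuousLinearMap.nonneg_of_denseRange_inner hΦ fun x => hT x x ▸ hB₀ x, ?_, hT⟩
  rw [← sub_nonneg]
  refine ContinuousLinearMap.nonneg_of_denseRange_inner hΦ fun x => ?_
  rw [sub_apply, one_apply_eq_self, inner_sub_right, hT, sub_nonneg]
  exact hB₁ x

end DenseRange

theorem ContinuousLinearMap.exists_real_eq_smul_one {K : Type*} [NormedAddCommGroup K]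
    [InnerProductSpace ℂ K] [CompleteSpace K] {c : ℂ} (h₀ : 0 ≤ c • (1 : K →L[ℂ] K))
    (h₁ : c • (1 : K →L[ℂ] K) ≤ 1) :
    ∃ t : ℝ, 0 ≤ t ∧ t ≤ 1 ∧ c • (1 : K →L[ℂ] K) = (t : ℂ) • 1 := by
  rcases subsingleton_or_nontrivial K with hK | hK
  · exact ⟨0, le_rfl, zero_le_one, Subsingleton.elim _ _⟩
  obtain ⟨z, hz⟩ := exists_ne (0 : K)
  have hzz : (0 : ℂ) < ⟪z, z⟫_ℂ := by
    rw [inner_self_eq_norm_sq_to_K, ← RCLike.ofReal_pow]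
    exact RCLike.ofReal_pos.2 (pow_pos (norm_pos_iff.2 hz) 2)
  have hc₀ : 0 ≤ c := by
    have := ((nonneg_iff_isPositive _).1 h₀).inner_nonneg_right z
    rw [smul_apply, one_apply_eq_self, inner_smul_right] at this
    exact le_of_mul_le_mul_right (by rwa [zero_mul]) hzz
  have hc₁ : c ≤ 1 := by
    have := ((nonneg_iff_isPositive _).1 (sub_nonneg.2 h₁)).inner_nonneg_right z
    rw [sub_apply, one_apply_eq_self, smul_apply, one_apply_eq_self, inner_sub_right,
      inner_smul_right, ← one_sub_mul] at this
    exact sub_nonneg.1 (le_of_mul_le_mul_right (by rwa [zero_mul]) hzz)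
  have hc : (c.re : ℂ) = c := Complex.conj_eq_iff_re.1 (IsSelfAdjoint.of_nonneg hc₀).star_eq
  refine ⟨c.re, (Complex.nonneg_iff.1 hc₀).1, ?_, by rw [hc]⟩
  exact_mod_cast hc ▸ hc₁

section StarSubalgebra

variable {B : Type*} [Ring B] [StarRing B] [Algebra ℂ B] [StarModule ℂ B]

theorem StarSubalgebra.real_smul_mem (S : StarSubalgebra ℂ B) (r : ℝ) {x : B} (hx : x ∈ S) :
    r • x ∈ S :=
  Complex.coe_smul r x ▸ S.smul_mem hx _

theorem StarSubalgebra.algebraMap_real_mem (S : StarSubalgebra ℂ B) (r : ℝ) :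
    algebraMap ℝ B r ∈ S := by
  rw [IsScalarTower.algebraMap_apply ℝ ℂ B]
  exact S.algebraMap_mem _

end StarSubalgebra

section CStarAlgebra

variable {B : Type*} [CStarAlgebra B] [PartialOrder B] [StarOrderedRing B]
  {S : StarSubalgebra ℂ B}

theorem StarSubalgebra.mem_bot_of_isSelfAdjoint
    (h : ∀ x ∈ S, 0 ≤ x → x ≤ 1 → x ∈ (⊥ : StarSubalgebra ℂ B))
    {x : B} (hxS : x ∈ S) (hx : IsSelfAdjoint x) : x ∈ (⊥ : StarSubalgebra ℂ B) := by
  set c : ℝ := ‖x‖ + 1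
  have hc : 0 < c := by positivity
  have hplus : 0 ≤ algebraMap ℝ B c + x := by
    rw [map_add, map_one, add_right_comm]
    exact add_nonneg (neg_le_iff_add_nonneg'.1 hx.neg_algebraMap_norm_le_self) zero_le_one
  have hminus : 0 ≤ algebraMap ℝ B c - x := by
    rw [map_add, map_one, add_sub_right_comm]
    exact add_nonneg (sub_nonneg.2 hx.le_algebraMap_norm_self) zero_le_one
  set P : B := (2 * c)⁻¹ • (algebraMap ℝ B c + x)
  have hone : (1 : B) = P + (2 * c)⁻¹ • (algebraMap ℝ B c - x) := by
    rw [← smul_add, add_add_sub_cancel, Algebra.algebraMap_eq_smul_one, ← add_smul, smul_smul]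
    field_simp
    simp
  have hP1 : P ≤ 1 := by
    rw [← sub_nonneg, hone, add_sub_cancel_left]
    exact smul_nonneg (by positivity) hminus
  have hP : P ∈ (⊥ : StarSubalgebra ℂ B) :=
    h P (S.real_smul_mem _ (add_mem (S.algebraMap_real_mem c) hxS))
      (smul_nonneg (by positivity) hplus) hP1
  have hxP : x = (2 * c) • P - algebraMap ℝ B c := by
    rw [smul_smul, mul_inv_cancel₀ (by positivity), one_smul, add_sub_cancel_left]
  rw [hxP]
  exact sub_mem (StarSubalgebra.real_smul_mem _ _ hP) (StarSubalgebra.algebraMap_real_mem _ c)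

theorem StarSubalgebra.eq_bot_of_forall_nonneg_le_one
    (h : ∀ x ∈ S, 0 ≤ x → x ≤ 1 → x ∈ (⊥ : StarSubalgebra ℂ B)) : S = ⊥ := by
  refine eq_bot_iff.2 fun x hx => ?_
  have hre : (realPart x : B) ∈ S := by
    rw [realPart_apply_coe]
    exact S.real_smul_mem _ (add_mem hx (star_mem hx))
  have him : (imaginaryPart x : B) ∈ S := by
    rw [imaginaryPart_apply_coe]
    exact S.smul_mem (S.real_smul_mem _ (sub_mem hx (star_mem hx))) _
  rw [← realPart_add_I_smul_imaginaryPart x]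
  exact add_mem (StarSubalgebra.mem_bot_of_isSelfAdjoint h hre (realPart x).2)
    ((⊥ : StarSubalgebra ℂ B).smul_mem
      (StarSubalgebra.mem_bot_of_isSelfAdjoint h him (imaginaryPart x).2) _)

end CStarAlgebra

section CountablyAdditive

open MeasureTheory

variable {X : Type*} [MeasurableSpace X]

open Classical in
def MeasureTheory.VectorMeasure.ofHasSum {M : Type*} [AddCommGroup M] [TopologicalSpace M]
    [IsTopologicalAddGroup M] [T2Space M] (m : Set X → M)
    (hm : ∀ s : ℕ → Set X, (∀ n, MeasurableSet (s n)) → Pairwise (Disjoint on s) →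
      HasSum (fun n => m (s n)) (m (⋃ n, s n))) : VectorMeasure X M where
  measureOf' s := if MeasurableSet s then m s else 0
  empty' := by
    have h := hm (fun _ => ∅) (fun _ => .empty) fun _ _ _ => disjoint_bot_left
    rw [Set.iUnion_empty] at h
    simp [tendsto_nhds_unique tendsto_const_nhds h.summable.tendsto_atTop_zero]
  not_measurable' _ hs := if_neg hs
  m_iUnion' s hs hd := by simpa [hs, MeasurableSet.iUnion hs] using hm s hs hd

theorem MeasureTheory.VectorMeasure.ofHasSum_apply {M : Type*} [AddCommGroup M]
    [TopologicalSpace M] [IsTopologicalAddGroup M] [T2Space M] {m : Set X → M} (hm) {s : Set X}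
    (hs : MeasurableSet s) : VectorMeasure.ofHasSum m hm s = m s :=
  if_pos hs

variable {K : Type*} [NormedAddCommGroup K] [InnerProductSpace ℂ K] [CompleteSpace K]
  {E : Set X → K →L[ℂ] K} {s t : Set X}

theorem IsPVM.map_union (hE : IsPVM E) (hst : Disjoint s t) (hs : MeasurableSet s)
    (ht : MeasurableSet t) : E (s ∪ t) = E s + E t := by
  refine ContinuousLinearMap.ext fun k => ext_inner_left ℂ fun h => ?_
  have := (VectorMeasure.ofHasSum (fun u => ⟪h, E u k⟫_ℂ) (hE.countably_additive h k)).of_union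
    hst hs ht
  simpa [VectorMeasure.ofHasSum_apply, hs, ht, hs.union ht, inner_add_right] using this

theorem IsPVM.mul_eq_zero_of_disjoint_s6 (hE : IsPVM E) (hst : Disjoint s t) (hs : MeasurableSet s)
    (ht : MeasurableSet t) : E s * E t = 0 := by
  have := IsAddTorsionFree.of_isTorsionFree ℂ (K →L[ℂ] K)
  have hidem : ∀ u, MeasurableSet u → IsIdempotentElem (E u) := hE.idempotent
  refine (hidem s hs).mul_eq_zero_of_anticommute (((hidem s hs).add_iff (hidem t ht)).1 ?_)
  rw [← hE.map_union hst hs ht]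
  exact hidem _ (hs.union ht)

theorem IsPVM.mul_eq_inter (hE : IsPVM E) (hs : MeasurableSet s) (ht : MeasurableSet t) :
    E s * E t = E (s ∩ t) := by
  have hs' : E s = E (s ∩ t) + E (s \ t) := by
    rw [← hE.map_union (Set.disjoint_sdiff_right.mono_left Set.inter_subset_right)
      (hs.inter ht) (hs.diff ht), Set.inter_union_sdiff]
  have ht' : E t = E (s ∩ t) + E (t \ s) := by
    rw [← hE.map_union (Set.disjoint_sdiff_right.mono_left Set.inter_subset_left)
      (hs.inter ht) (ht.diff hs), Set.inter_comm, Set.inter_union_sdiff]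
  rw [hs', ht', add_mul, mul_add, mul_add, hE.idempotent _ (hs.inter ht),
    hE.mul_eq_zero_of_disjoint_s6 (Set.disjoint_sdiff_right.mono_left Set.inter_subset_left)
      (hs.inter ht) (ht.diff hs),
    hE.mul_eq_zero_of_disjoint_s6 (Set.disjoint_sdiff_left.mono_right Set.inter_subset_right)
      (hs.diff ht) (hs.inter ht),
    hE.mul_eq_zero_of_disjoint_s6 disjoint_sdiff_sdiff (hs.diff ht) (ht.diff hs)]
  simp

end CountablyAdditive

section Partition

variable {X ι : Type*} (s : ι → Set X)

def partitionAtom (u : Finset ι) : Set X :=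
  {x | ∀ p, x ∈ s p ↔ p ∈ u}

theorem measurableSet_partitionAtom [MeasurableSpace X] [Countable ι] {s : ι → Set X}
    (hs : ∀ p, MeasurableSet (s p)) (u : Finset ι) : MeasurableSet (partitionAtom s u) :=
  measurableSet_setOfPred.2 (Measurable.forall fun p => (hs p).mem.iff measurable_const)

theorem pairwiseDisjoint_partitionAtom (U : Set (Finset ι)) :
    U.PairwiseDisjoint (partitionAtom s) := fun _ _ _ _ huw =>
  Set.disjoint_left.2 fun _ hu hw => huw (Finset.ext fun p => (hu p).symm.trans (hw p))

theorem inter_eq_biUnion_partitionAtom [Fintype ι] [DecidableEq ι] (p q : ι) :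
    s p ∩ s q = ⋃ u ∈ Finset.univ.filter (fun u => p ∈ u ∧ q ∈ u), partitionAtom s u := by
  classical
  ext x
  simp only [Set.mem_inter_iff, Set.mem_iUnion, Finset.mem_filter, Finset.mem_univ, true_and,
    exists_prop]
  constructor
  · rintro ⟨hp, hq⟩
    exact ⟨Finset.univ.filter (x ∈ s ·), by simpa using ⟨hp, hq⟩, fun r => by simp⟩
  · rintro ⟨u, ⟨hp, hq⟩, hx⟩
    exact ⟨(hx p).2 hp, (hx q).2 hq⟩

end Partition

section GramKernel

open MeasureTheory

variable {X A H : Type*} [MeasurableSpace X] [NormedRing A] [StarRing A] [NormedAlgebra ℂ A]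
  [NormedAddCommGroup H] [InnerProductSpace ℂ H]

structure DilationIndex (X A H : Type*) [MeasurableSpace X] where
  a : A
  s : Set X
  hs : MeasurableSet s
  h : H

/-- For `Ψ = J.toFun` this is the Gram matrix `⟪π(a_q)E(s_q)Vh_q, π(a_p)E(s_p)Vh_p⟫` of the
vectors of any bi-dilation of `J`. -/
def gramKernel (Ψ : Set X → A →ₗ[ℂ] (H →L[ℂ] H)) (q p : DilationIndex X A H) : ℂ :=
  ⟪q.h, Ψ (q.s ∩ p.s) (star q.a * p.a) p.h⟫_ℂ

theorem gramKernel_congr {Ψ₁ Ψ₂ : Set X → A →ₗ[ℂ] (H →L[ℂ] H)}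
    (h : ∀ s, MeasurableSet s → Ψ₁ s = Ψ₂ s) : gramKernel Ψ₁ = gramKernel Ψ₂ := by
  ext q p
  simp only [gramKernel, h _ (q.hs.inter p.hs)]

theorem eq_of_gramKernel_eq {Ψ₁ Ψ₂ : Set X → A →ₗ[ℂ] (H →L[ℂ] H)}
    (h : gramKernel Ψ₁ = gramKernel Ψ₂) {s : Set X} (hs : MeasurableSet s) : Ψ₁ s = Ψ₂ s := by
  refine LinearMap.ext fun a => ContinuousLinearMap.ext fun k => ext_inner_left ℂ fun h' => ?_
  simpa [gramKernel] using congrFun₂ h ⟨1, Set.univ, .univ, h'⟩ ⟨a, s, hs, k⟩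

theorem gramKernel_smul (c : ℂ) (Ψ : Set X → A →ₗ[ℂ] (H →L[ℂ] H)) (q p : DilationIndex X A H) :
    gramKernel (fun s => c • Ψ s) q p = c * gramKernel Ψ q p := by
  simp [gramKernel]

theorem IsCompletelyPositive.sum_nonneg {φ : A →ₗ[ℂ] (H →L[ℂ] H)} (hφ : IsCompletelyPositive φ)
    {ι : Type*} [Fintype ι] (a : ι → A) (h : ι → H) :
    0 ≤ ∑ p, ∑ q, ⟪h p, φ (star (a p) * a q) (h q)⟫_ℂ := by
  let e := Fintype.equivFin ι
  simpa only [← e.symm.sum_comp, Function.comp_apply] using hφ _ (a ∘ e.symm) (h ∘ e.symm)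

namespace CPInstrument

variable (J : CPInstrument X A H)

theorem inner_inter_eq_sum_partitionAtom {ι : Type*} [Fintype ι] [DecidableEq ι]
    {s : ι → Set X} (hs : ∀ p, MeasurableSet (s p)) (p q : ι) (b : A) (k l : H) :
    ⟪k, J.toFun (s p ∩ s q) b l⟫_ℂ
      = ∑ u, if p ∈ u ∧ q ∈ u then ⟪k, J.toFun (partitionAtom s u) b l⟫_ℂ else 0 := by
  let μ := VectorMeasure.ofHasSum (fun t => ⟪k, J.toFun t b l⟫_ℂ) (J.countably_additive b k l)
  have key := μ.of_biUnion_finset (s := Finset.univ.filter fun u => p ∈ u ∧ q ∈ u)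
    (pairwiseDisjoint_partitionAtom s _) fun u _ => measurableSet_partitionAtom hs u
  rw [← inter_eq_biUnion_partitionAtom, Finset.sum_filter] at key
  simpa only [μ, VectorMeasure.ofHasSum_apply _ ((hs p).inter (hs q)),
    VectorMeasure.ofHasSum_apply _ (measurableSet_partitionAtom hs _)] using key

/-- On each atom of the partition generated by the `s p`, the sum is nonnegative by complete
positivity. -/
theorem sum_inner_inter_nonneg {ι : Type*} [Fintype ι] (a : ι → A) {s : ι → Set X}
    (hs : ∀ p, MeasurableSet (s p)) (h : ι → H) :
    0 ≤ ∑ p, ∑ q, ⟪h p, J.toFun (s p ∩ s q) (star (a p) * a q) (h q)⟫_ℂ := by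
  classical
  calc (0 : ℂ) ≤ ∑ u, ∑ p, ∑ q, ⟪if p ∈ u then h p else 0,
        J.toFun (partitionAtom s u) (star (a p) * a q) (if q ∈ u then h q else 0)⟫_ℂ :=
      Finset.sum_nonneg fun u _ => (J.cp _ (measurableSet_partitionAtom hs u)).sum_nonneg a _
    _ = ∑ p, ∑ q, ∑ u, if p ∈ u ∧ q ∈ u then
        ⟪h p, J.toFun (partitionAtom s u) (star (a p) * a q) (h q)⟫_ℂ else 0 := by
      rw [Finset.sum_comm]
      refine Finset.sum_congr rfl fun p _ => ?_
      rw [Finset.sum_comm]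
      refine Finset.sum_congr rfl fun q _ => Finset.sum_congr rfl fun u _ => ?_
      split_ifs <;> simp_all
    _ = _ := by simp only [J.inner_inter_eq_sum_partitionAtom hs]

theorem sesqForm_gramKernel_self_nonneg (x : DilationIndex X A H →₀ ℂ) :
    0 ≤ Finsupp.sesqForm (gramKernel J.toFun) x x := by
  have := J.sum_inner_inter_nonneg (ι := x.support) (fun p => p.1.a) (fun p => p.1.hs)
    (fun p => x p • p.1.h)
  simp only [inner_smul_left, map_smul, inner_smul_right] at this
  rw [Finsupp.sesqForm_apply]
  simp only [Finsupp.sum, ← Finset.sum_coe_sort x.support]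
  refine this.trans_eq (Finset.sum_congr rfl fun q _ => Finset.sum_congr rfl fun p _ => ?_)
  simp only [gramKernel]
  ring

def Dominates.sub {J' : CPInstrument X A H} (hdom : J.Dominates J') : CPInstrument X A H where
  toFun s := J.toFun s - J'.toFun s
  cp := hdom
  countably_additive a h k s hs hd := by
    simpa only [LinearMap.sub_apply, sub_apply, inner_sub_right] using
      (J.countably_additive a h k s hs hd).sub (J'.countably_additive a h k s hs hd)

theorem Dominates.gramKernel_sub {J' : CPInstrument X A H} (hdom : J.Dominates J') :
    gramKernel hdom.sub.toFun = gramKernel J.toFun - gramKernel J'.toFun := by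
  ext q p
  simp [gramKernel, Dominates.sub]

end CPInstrument

end GramKernel

section BiDilation

variable {X A H K : Type*} [MeasurableSpace X] [NormedRing A] [StarRing A] [NormedAlgebra ℂ A]
  [NormedAddCommGroup H] [InnerProductSpace ℂ H]
  [NormedAddCommGroup K] [InnerProductSpace ℂ K] [CompleteSpace K]
  (π : A →⋆ₐ[ℂ] (K →L[ℂ] K)) (E : Set X → K →L[ℂ] K) (V : H →L[ℂ] K)

def DilationIndex.toVec (p : DilationIndex X A H) : K :=
  π p.a (E p.s (V p.h))

def spectralRange : Set (K →L[ℂ] K) :=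
  {T | ∃ (a : A) (s : Set X), MeasurableSet s ∧ T = π a * E s}

variable {π E V}

theorem map_apply_toVec (b : A) (p : DilationIndex X A H) :
    π b (p.toVec π E V) = DilationIndex.toVec π E V ⟨b * p.a, p.s, p.hs, p.h⟩ := by
  simp [DilationIndex.toVec]

variable [CompleteSpace H]

def compress (π : A →⋆ₐ[ℂ] (K →L[ℂ] K)) (V : H →L[ℂ] K) (Q : K →L[ℂ] K) :
    A →ₗ[ℂ] (H →L[ℂ] H) where
  toFun a := (ContinuousLinearMap.adjoint V).comp ((π a * Q).comp V)
  map_add' a b := by simp [add_mul]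
  map_smul' c a := by simp

theorem compress_smul (c : ℂ) (Q : K →L[ℂ] K) : compress π V (c • Q) = c • compress π V Q := by
  ext a : 1
  simp [compress]

theorem compress_sub (Q₁ Q₂ : K →L[ℂ] K) :
    compress π V (Q₁ - Q₂) = compress π V Q₁ - compress π V Q₂ := by
  ext a : 1
  simp [compress, mul_sub]

theorem StarAlgHom.adjoint_map (a : A) : ContinuousLinearMap.adjoint (π a) = π (star a) := by
  rw [← ContinuousLinearMap.star_eq_adjoint, map_star]

theorem inner_compress_apply (Q : K →L[ℂ] K) (a : A) (h k : H) :
    ⟪h, compress π V Q a k⟫_ℂ = ⟪π (star a) (V h), Q (V k)⟫_ℂ := by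
  simp only [compress, LinearMap.coe_mk, AddHom.coe_mk, ContinuousLinearMap.comp_apply,
    ContinuousLinearMap.adjoint_inner_right, mul_apply_eq_comp]
  rw [← StarAlgHom.adjoint_map, ContinuousLinearMap.adjoint_inner_left]

theorem isCompletelyPositive_compress {Q : K →L[ℂ] K} (hQ : 0 ≤ Q) (hQπ : ∀ a, Commute (π a) Q) :
    IsCompletelyPositive (compress π V Q) := by
  intro n a h
  have hterm : ∀ i j, ⟪h i, compress π V Q (star (a i) * a j) (h j)⟫_ℂ
      = ⟪π (a i) (V (h i)), Q (π (a j) (V (h j)))⟫_ℂ := by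
    intro i j
    simp only [compress, LinearMap.coe_mk, AddHom.coe_mk, ContinuousLinearMap.comp_apply,
      ContinuousLinearMap.adjoint_inner_right, map_mul, mul_assoc, (hQπ (a j)).eq]
    rw [mul_apply_eq_comp, ← StarAlgHom.adjoint_map,
      ContinuousLinearMap.adjoint_inner_right]
    rfl
  simp only [hterm, ← inner_sum, ← map_sum, ← sum_inner]
  exact ((ContinuousLinearMap.nonneg_iff_isPositive Q).1 hQ).inner_nonneg_right _

theorem IsPVM.mem_centralizer_spectralRange_iff {E : Set X → K →L[ℂ] K} (hE : IsPVM E)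
    {W : K →L[ℂ] K} : W ∈ Set.centralizer (spectralRange π E) ↔
      (∀ a, Commute (π a) W) ∧ ∀ s, MeasurableSet s → Commute (E s) W := by
  refine ⟨fun hW => ⟨fun a => ?_, fun s hs => ?_⟩, fun ⟨hWπ, hWE⟩ => ?_⟩
  · have := hW _ ⟨a, Set.univ, .univ, rfl⟩
    rwa [hE.map_univ, mul_one] at this
  · have := hW _ ⟨1, s, hs, rfl⟩
    rwa [map_one, one_mul] at this
  · rintro _ ⟨a, s, hs, rfl⟩
    exact ((hWπ a).mul_left (hWE s hs)).eq

namespace IsMinimalBiDilation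

variable {J : CPInstrument X A H}

theorem toFun_eq_compress (hdil : IsMinimalBiDilation J π E V) {s : Set X}
    (hs : MeasurableSet s) : J.toFun s = compress π V (E s) :=
  LinearMap.ext fun a => hdil.dilation s a hs

theorem star_spectralRange_subset (hdil : IsMinimalBiDilation J π E V) :
    star (spectralRange π E) ⊆ spectralRange π E := by
  rintro T ⟨a, s, hs, h⟩
  refine ⟨star a, s, hs, ?_⟩
  rw [← star_star T, h, star_mul, (hdil.pvm.selfAdjoint s hs).star_eq, ← map_star,
    hdil.commutes s _ hs]

theorem denseRange_linearCombination (hdil : IsMinimalBiDilation J π E V) :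
    DenseRange (Finsupp.linearCombination ℂ (DilationIndex.toVec π E V)) := by
  have hgen : {y : K | ∃ (a : A) (s : Set X) (h : H), MeasurableSet s ∧ y = π a (E s (V h))}
      = Set.range (DilationIndex.toVec π E V) := by
    ext y
    constructor
    · rintro ⟨a, s, h, hs, rfl⟩
      exact ⟨⟨a, s, hs, h⟩, rfl⟩
    · rintro ⟨p, rfl⟩
      exact ⟨p.a, p.s, p.h, p.hs, rfl⟩
  rw [DenseRange, ← LinearMap.coe_range, Finsupp.range_linearCombination,
    Submodule.dense_iff_topologicalClosure_eq_top, ← hgen]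
  exact hdil.minimal

theorem ext_of_inner_toVec (hdil : IsMinimalBiDilation J π E V) {W₁ W₂ : K →L[ℂ] K}
    (h : ∀ q p : DilationIndex X A H,
      ⟪q.toVec π E V, W₁ (p.toVec π E V)⟫_ℂ = ⟪q.toVec π E V, W₂ (p.toVec π E V)⟫_ℂ) :
    W₁ = W₂ := by
  refine ContinuousLinearMap.ext_of_denseRange_inner hdil.denseRange_linearCombination
    fun x y => ?_
  have key : ∀ W : K →L[ℂ] K, ⟪Finsupp.linearCombination ℂ (DilationIndex.toVec π E V) x,
      W (Finsupp.linearCombination ℂ (DilationIndex.toVec π E V) y)⟫_ℂ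
      = Finsupp.sesqForm (fun q p => ⟪q.toVec π E V, W (p.toVec π E V)⟫_ℂ) x y := fun W => by
    rw [Finsupp.sesqForm_inner, ← ContinuousLinearMap.coe_coe W, Finsupp.apply_linearCombination]
    rfl
  rw [key, key, funext₂ h]

theorem inner_toVec_apply_toVec (hdil : IsMinimalBiDilation J π E V) {W : K →L[ℂ] K}
    (hW : W ∈ Set.centralizer (spectralRange π E)) (q p : DilationIndex X A H) :
    ⟪q.toVec π E V, W (p.toVec π E V)⟫_ℂ = gramKernel (fun s => compress π V (E s * W)) q p := by
  obtain ⟨hWπ, hWE⟩ := hdil.pvm.mem_centralizer_spectralRange_iff.1 hW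
  have hEπ : ∀ b, Commute (E q.s) (π b) := fun b => hdil.commutes q.s b q.hs
  have hop : ContinuousLinearMap.adjoint (π q.a * E q.s) * (W * (π p.a * E p.s))
      = π (star q.a * p.a) * (E (q.s ∩ p.s) * W) := by
    rw [← ContinuousLinearMap.star_eq_adjoint, star_mul, (hdil.pvm.selfAdjoint _ q.hs).star_eq,
      ← map_star, ← ((hWπ p.a).mul_left (hWE _ p.hs)).eq, map_mul,
      ← hdil.pvm.mul_eq_inter q.hs p.hs]
    simp only [mul_assoc, (hEπ _).left_comm]
  calc ⟪q.toVec π E V, W (p.toVec π E V)⟫_ℂ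
      = ⟪(π q.a * E q.s) (V q.h), (W * (π p.a * E p.s)) (V p.h)⟫_ℂ := rfl
    _ = ⟪V q.h,
          (ContinuousLinearMap.adjoint (π q.a * E q.s) * (W * (π p.a * E p.s))) (V p.h)⟫_ℂ := by
      rw [mul_apply_eq_comp (ContinuousLinearMap.adjoint _),
        ContinuousLinearMap.adjoint_inner_right]
    _ = gramKernel (fun s => compress π V (E s * W)) q p := by
      rw [hop]
      exact (ContinuousLinearMap.adjoint_inner_right _ _ _).symm

theorem gramKernel_eq_inner (hdil : IsMinimalBiDilation J π E V) (q p : DilationIndex X A H) :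
    gramKernel J.toFun q p = ⟪q.toVec π E V, p.toVec π E V⟫_ℂ := by
  have h1 := hdil.inner_toVec_apply_toVec (W := 1) (fun _ _ => by simp) q p
  simp only [mul_one] at h1
  rw [gramKernel_congr fun s hs => hdil.toFun_eq_compress hs, ← h1]
  rfl

theorem apply_toVec (hdil : IsMinimalBiDilation J π E V) {t : Set X} (ht : MeasurableSet t)
    (p : DilationIndex X A H) :
    E t (p.toVec π E V) = DilationIndex.toVec π E V ⟨p.a, t ∩ p.s, ht.inter p.hs, p.h⟩ := by
  simp only [DilationIndex.toVec, ← hdil.pvm.mul_eq_inter ht p.hs, ← mul_apply_eq_comp,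
    ← mul_assoc, hdil.commutes t _ ht]

/-- `π(b)` and `E(t)` act on the labels by `a ↦ b a` and `s ↦ t ∩ s`, and moving `b*`, resp. `t`,
from one argument of a Gram kernel to the other leaves it unchanged. -/
theorem mem_centralizer_of_inner_toVec (hdil : IsMinimalBiDilation J π E V) {T : K →L[ℂ] K}
    (Ψ : Set X → A →ₗ[ℂ] (H →L[ℂ] H))
    (hT : ∀ q p, ⟪q.toVec π E V, T (p.toVec π E V)⟫_ℂ = gramKernel Ψ q p) :
    T ∈ Set.centralizer (spectralRange π E) := by
  refine hdil.pvm.mem_centralizer_spectralRange_iff.2 ⟨fun b => ?_, fun t ht => ?_⟩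
  · refine hdil.ext_of_inner_toVec fun q p => ?_
    rw [mul_apply_eq_comp, mul_apply_eq_comp, ← ContinuousLinearMap.adjoint_inner_left,
      StarAlgHom.adjoint_map, map_apply_toVec, map_apply_toVec, hT, hT]
    simp [gramKernel, mul_assoc]
  · refine hdil.ext_of_inner_toVec fun q p => ?_
    rw [mul_apply_eq_comp, mul_apply_eq_comp, ← ContinuousLinearMap.adjoint_inner_left,
      (hdil.pvm.selfAdjoint t ht).adjoint_eq, hdil.apply_toVec ht, hdil.apply_toVec ht, hT, hT]
    simp [gramKernel, Set.inter_assoc, Set.inter_left_comm]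

def compressionInstrument (hdil : IsMinimalBiDilation J π E V) {W : K →L[ℂ] K} (hW₀ : 0 ≤ W)
    (hW : W ∈ Set.centralizer (spectralRange π E)) : CPInstrument X A H where
  toFun s := compress π V (E s * W)
  cp s hs := by
    obtain ⟨hWπ, hWE⟩ := hdil.pvm.mem_centralizer_spectralRange_iff.1 hW
    have hEW : E s * W = star (E s) * W * E s := by
      rw [(hdil.pvm.selfAdjoint s hs).star_eq, mul_assoc, ← (hWE s hs).eq, ← mul_assoc,
        hdil.pvm.idempotent s hs]
    refine isCompletelyPositive_compress ?_ fun a => ?_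
    · rw [hEW]
      exact star_left_conjugate_nonneg hW₀ _
    · exact (Commute.symm (hdil.commutes s a hs)).mul_right (hWπ a)
  countably_additive a h k s hs hd := by
    simpa only [inner_compress_apply, mul_apply_eq_comp] using
      hdil.pvm.countably_additive (π (star a) (V h)) (W (V k)) s hs hd

theorem dominates_compressionInstrument (hdil : IsMinimalBiDilation J π E V) {W : K →L[ℂ] K}
    (hW₀ : 0 ≤ W) (hW₁ : W ≤ 1) (hW : W ∈ Set.centralizer (spectralRange π E)) :
    J.Dominates (hdil.compressionInstrument hW₀ hW) := by
  obtain ⟨hWπ, hWE⟩ := hdil.pvm.mem_centralizer_spectralRange_iff.1 hW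
  have hW' : 1 - W ∈ Set.centralizer (spectralRange π E) :=
    hdil.pvm.mem_centralizer_spectralRange_iff.2
      ⟨fun a => (Commute.one_right _).sub_right (hWπ a),
        fun s hs => (Commute.one_right _).sub_right (hWE s hs)⟩
  intro s hs
  have h : IsCompletelyPositive (compress π V (E s * (1 - W))) :=
    (hdil.compressionInstrument (sub_nonneg.2 hW₁) hW').cp s hs
  rwa [mul_sub, mul_one, compress_sub, ← hdil.toFun_eq_compress hs] at h

theorem exists_radonNikodym (hdil : IsMinimalBiDilation J π E V) {J' : CPInstrument X A H}
    (hdom : J.Dominates J') :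
    ∃ T : K →L[ℂ] K, 0 ≤ T ∧ T ≤ 1 ∧ T ∈ Set.centralizer (spectralRange π E) ∧
      ∀ s, MeasurableSet s → J'.toFun s = compress π V (E s * T) := by
  set Φ := Finsupp.linearCombination ℂ (DilationIndex.toVec π E V)
  have hJ : ∀ x y, Finsupp.sesqForm (gramKernel J.toFun) x y = ⟪Φ x, Φ y⟫_ℂ := fun x y => by
    rw [← Finsupp.sesqForm_inner]
    congr
    ext q p
    exact hdil.gramKernel_eq_inner q p
  obtain ⟨T, hT₀, hT₁, hT⟩ := exists_nonneg_le_one_inner_map_eq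
    hdil.denseRange_linearCombination (Finsupp.sesqForm (gramKernel J'.toFun))
    J'.sesqForm_gramKernel_self_nonneg fun x => by
      rw [← hJ, ← sub_nonneg, ← Finsupp.sesqForm_sub, ← hdom.gramKernel_sub]
      exact hdom.sub.sesqForm_gramKernel_self_nonneg x
  have hTgen : ∀ q p, ⟪q.toVec π E V, T (p.toVec π E V)⟫_ℂ = gramKernel J'.toFun q p :=
    fun q p => by simpa [Φ] using hT (Finsupp.single q 1) (Finsupp.single p 1)
  have hTc := hdil.mem_centralizer_of_inner_toVec _ hTgen
  refine ⟨T, hT₀, hT₁, hTc, fun s hs =>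
    eq_of_gramKernel_eq (Ψ₂ := fun s => compress π V (E s * T)) ?_ hs⟩
  ext q p
  rw [← hdil.inner_toVec_apply_toVec hTc, hTgen]

theorem coe_starSubalgebraCentralizer (hdil : IsMinimalBiDilation J π E V) :
    (StarSubalgebra.centralizer ℂ (spectralRange π E) : Set (K →L[ℂ] K))
      = Set.centralizer (spectralRange π E) := by
  rw [StarSubalgebra.coe_centralizer, Set.union_eq_left.2 hdil.star_spectralRange_subset]

theorem eq_smul_one_of_isPure (hdil : IsMinimalBiDilation J π E V) (hpure : J.IsPure)
    {W : K →L[ℂ] K} (hW₀ : 0 ≤ W) (hW₁ : W ≤ 1) (hW : W ∈ Set.centralizer (spectralRange π E)) :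
    ∃ t : ℝ, W = (t : ℂ) • 1 := by
  obtain ⟨t, -, -, ht⟩ := hpure _ (hdil.dominates_compressionInstrument hW₀ hW₁ hW)
  refine ⟨t, hdil.ext_of_inner_toVec fun q p => ?_⟩
  rw [hdil.inner_toVec_apply_toVec hW, smul_apply, one_apply_eq_self,
    inner_smul_right, ← hdil.gramKernel_eq_inner, ← gramKernel_smul]
  exact congrFun₂ (gramKernel_congr ht) q p

theorem centralizer_spectralRange_eq_of_isPure (hdil : IsMinimalBiDilation J π E V)
    (hpure : J.IsPure) :
    Set.centralizer (spectralRange π E) = Set.range (fun c : ℂ => c • (1 : K →L[ℂ] K)) := by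
  have hbot := StarSubalgebra.eq_bot_of_forall_nonneg_le_one
    (S := StarSubalgebra.centralizer ℂ (spectralRange π E)) fun W hW hW₀ hW₁ => by
      rw [← SetLike.mem_coe, hdil.coe_starSubalgebraCentralizer] at hW
      obtain ⟨t, rfl⟩ := hdil.eq_smul_one_of_isPure hpure hW₀ hW₁ hW
      exact ⟨t, Algebra.algebraMap_eq_smul_one _⟩
  rw [← hdil.coe_starSubalgebraCentralizer, hbot, StarSubalgebra.coe_bot]
  ext T
  simp [Algebra.algebraMap_eq_smul_one]

theorem isPure_of_centralizer_spectralRange_eq (hdil : IsMinimalBiDilation J π E V)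
    (h : Set.centralizer (spectralRange π E) = Set.range (fun c : ℂ => c • (1 : K →L[ℂ] K))) :
    J.IsPure := by
  intro J' hdom
  obtain ⟨T, hT₀, hT₁, hTc, hJ'⟩ := hdil.exists_radonNikodym hdom
  rw [h] at hTc
  obtain ⟨c, rfl : c • (1 : K →L[ℂ] K) = T⟩ := hTc
  obtain ⟨t, ht₀, ht₁, hct⟩ := ContinuousLinearMap.exists_real_eq_smul_one hT₀ hT₁
  refine ⟨t, ht₀, ht₁, fun s hs => ?_⟩
  rw [hJ' s hs, hct, mul_smul_comm, mul_one, compress_smul, hdil.toFun_eq_compress hs]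

end IsMinimalBiDilation

end BiDilation

theorem CPInstrument.pure_iff_irreducible_general
    {X A H K : Type*} [MeasurableSpace X]
    [NormedRing A] [StarRing A] [NormedAlgebra ℂ A]
    [NormedAddCommGroup H] [InnerProductSpace ℂ H] [CompleteSpace H]
    [NormedAddCommGroup K] [InnerProductSpace ℂ K] [CompleteSpace K]
    (J : CPInstrument X A H) (π : A →⋆ₐ[ℂ] (K →L[ℂ] K))
    (E : Set X → K →L[ℂ] K) (V : H →L[ℂ] K)
    (hdil : IsMinimalBiDilation J π E V) :
    J.IsPure ↔
      Set.centralizer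
          {T : K →L[ℂ] K | ∃ (a : A) (s : Set X), MeasurableSet s ∧ T = π a * E s}
        = Set.range (fun c : ℂ => c • (1 : K →L[ℂ] K)) :=
  ⟨hdil.centralizer_spectralRange_eq_of_isPure, hdil.isPure_of_centralizer_spectralRange_eq⟩

/-- **Characterization of pure instruments.** A CP instrument with minimal bi-dilation
`(𝒦, π, E, V)` is pure iff the spectral instrument `πE` is irreducible, i.e. the
commutant `{π(a)E(A)}′` equals `ℂ·I`. -/
theorem CPInstrument.pure_iff_irreducible
    {X A H K : Type*} [MeasurableSpace X]
    [NormedRing A] [StarRing A] [CStarRing A] [NormedAlgebra ℂ A] [StarModule ℂ A]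
    [CompleteSpace A] [NormedAddCommGroup H] [InnerProductSpace ℂ H] [CompleteSpace H]
    [NormedAddCommGroup K] [InnerProductSpace ℂ K] [CompleteSpace K]
    (J : CPInstrument X A H) (π : A →⋆ₐ[ℂ] (K →L[ℂ] K))
    (E : Set X → K →L[ℂ] K) (V : H →L[ℂ] K)
    (hdil : IsMinimalBiDilation J π E V) :
    J.IsPure ↔
      Set.centralizer
          {T : K →L[ℂ] K | ∃ (a : A) (s : Set X), MeasurableSet s ∧ T = π a * E s}
        = Set.range (fun c : ℂ => c • (1 : K →L[ℂ] K)) :=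
  CPInstrument.pure_iff_irreducible_general J π E V hdil
end
end

section
/- Let ℐ : 𝒪(X) → CP(𝒜, B(ℋ)) be a unital CP instrument with minimal bi-dilation quadruple (𝒦, π, E, V), and let P₁ and P₂ be the orthogonal projections of 𝒦 onto the closed subspaces [π(𝒜)V(ℋ)] and [E(𝒪(X))V(ℋ)] respectively. Then the following are equivalent: (i) ℐ is decomposable, i.e. ℐ(A)(a) = φ_ℐ(a)μ_ℐ(A) for all a ∈ 𝒜, A ∈ 𝒪(X); (ii) P₁E(A)P₁VV* = VV*P₁E(A)P₁VV* = VV*P₁E(A)P₁ for all A ∈ 𝒪(X); (iii) P₂π(a)P₂VV* = VV*P₂π(a)P₂VV* = VV*π(a)P₂ for all a ∈ 𝒜. -/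
open scoped InnerProductSpace ComplexOrder
open Function

noncomputable section

/-! Unitality makes `V` an isometry, so `Q = VV*` is the projection onto `Vℋ`, and `P₁Q = Q = P₂Q`.
Decomposability says `V*π(a)(1 - Q)E(A)V = 0` for all `a`, i.e. `(1 - Q)E(A)Vℋ ⊥ π(𝒜)Vℋ`, i.e.
`P₁E(A)Q = QE(A)Q`. Taking adjoints it equally says `V*E(A)(1 - Q)π(a)V = 0`, i.e.
`P₂π(a)Q = Qπ(a)Q`. Conditions (ii) and (iii) are these identities together with their adjoints,
and the adjoint identities come for free because `E(A)` is self-adjoint and `π(𝒜)` is closed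
under `*`. -/

open ContinuousLinearMap

open scoped InnerProduct

section StarRing

variable {R : Type*} [Ring R] [StarRing R] {P Q : R}

lemma IsSelfAdjoint.mul_mul_eq_of_mul_eq (hP : IsSelfAdjoint P) (hQ : IsSelfAdjoint Q)
    (hPQ : P * Q = Q) (x : R) : Q * (P * x) = Q * x := by
  have hQP : Q * P = Q := by simpa [hP.star_eq, hQ.star_eq] using congrArg star hPQ
  rw [← mul_assoc, hQP]

lemma star_mul_mul_of_isSelfAdjoint (hP : IsSelfAdjoint P) (hQ : IsSelfAdjoint Q) (T : R) :
    star (P * T * Q) = Q * star T * P := by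
  simp [mul_assoc, hP.star_eq, hQ.star_eq]

lemma compression_eq_and_iff (hP : IsSelfAdjoint P) (hQ : IsSelfAdjoint Q) (hPQ : P * Q = Q)
    (T : R) :
    (P * T * P * Q = Q * (P * T * P) * Q ∧ Q * (P * T * P) * Q = Q * T * P) ↔
      (P * T * Q = Q * T * Q ∧ Q * T * Q = Q * T * P) := by
  simp only [mul_assoc, hPQ, hP.mul_mul_eq_of_mul_eq hQ hPQ]

lemma compression_eq_iff_of_isSelfAdjoint (hP : IsSelfAdjoint P) (hQ : IsSelfAdjoint Q)
    (hPQ : P * Q = Q) {T : R} (hT : IsSelfAdjoint T) :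
    (P * T * P * Q = Q * (P * T * P) * Q ∧ Q * (P * T * P) * Q = Q * (P * T * P)) ↔
      P * T * Q = Q * T * Q := by
  calc _ ↔ P * T * Q = Q * T * Q ∧ Q * T * Q = Q * T * P := by
        simp only [mul_assoc, hPQ, hP.mul_mul_eq_of_mul_eq hQ hPQ]
    _ ↔ P * T * Q = Q * T * Q := and_iff_left_of_imp fun h => by
        have := congrArg star h
        rwa [star_mul_mul_of_isSelfAdjoint hP hQ, star_mul_mul_of_isSelfAdjoint hQ hQ,
          hT.star_eq, eq_comm] at this

lemma forall_compression_eq_iff {A : Type*} [InvolutiveStar A] (f : A → R)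
    (hf : ∀ a, f (star a) = star (f a)) (hP : IsSelfAdjoint P) (hQ : IsSelfAdjoint Q)
    (hPQ : P * Q = Q) :
    (∀ a, P * f a * P * Q = Q * (P * f a * P) * Q ∧ Q * (P * f a * P) * Q = Q * f a * P) ↔
      ∀ a, P * f a * Q = Q * f a * Q := by
  simp only [compression_eq_and_iff hP hQ hPQ]
  refine ⟨fun h a => (h a).1, fun h a => ⟨h a, ?_⟩⟩
  have := congrArg star (h (star a))
  rwa [star_mul_mul_of_isSelfAdjoint hP hQ, star_mul_mul_of_isSelfAdjoint hQ hQ, hf, star_star,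
    eq_comm] at this

end StarRing

section Hilbert

variable {H K : Type*} [NormedAddCommGroup H] [InnerProductSpace ℂ H] [CompleteSpace H]
  [NormedAddCommGroup K] [InnerProductSpace ℂ K] [CompleteSpace K]
  {P : K →L[ℂ] K} {S : Set K} {V : H →L[ℂ] K}

lemma IsStarProjection.mul_self_comp_adjoint_of_forall_mem (hP : IsStarProjection P)
    (hrange : LinearMap.range (P : K →ₗ[ℂ] K) = (Submodule.span ℂ S).topologicalClosure)
    (hV : ∀ x, V x ∈ S) : P * (V ∘L V†) = V ∘L V† := by
  ext y
  have : V ((V†) y) ∈ LinearMap.range (P : K →ₗ[ℂ] K) :=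
    hrange ▸ Submodule.le_topologicalClosure _ (Submodule.subset_span (hV _))
  exact (LinearMap.IsIdempotentElem.mem_range_iff hP.isIdempotentElem.toLinearMap).mp this

lemma IsStarProjection.apply_eq_iff_forall_inner_eq (hP : IsStarProjection P)
    (hrange : LinearMap.range (P : K →ₗ[ℂ] K) = (Submodule.span ℂ S).topologicalClosure)
    {u w : K} (hw : P w = w) :
    P u = w ↔ ∀ y ∈ S, ⟪y, u⟫_ℂ = ⟪y, w⟫_ℂ := by
  obtain ⟨_, hPeq⟩ := isStarProjection_iff_eq_starProjection_range.mp hP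
  calc P u = w ↔ P (u - w) = 0 := by rw [map_sub, hw, sub_eq_zero]
    _ ↔ u - w ∈ (Submodule.span ℂ S)ᗮ := by
        conv_lhs => rw [hPeq]
        rw [Submodule.starProjection_apply_eq_zero_iff, hrange, Submodule.orthogonal_closure]
    _ ↔ ∀ y ∈ S, ⟪y, u⟫_ℂ = ⟪y, w⟫_ℂ := by
        simp only [Submodule.mem_orthogonal, inner_sub_right, sub_eq_zero]
        refine ⟨fun h y hy => h y (Submodule.subset_span hy), fun h y hy => ?_⟩
        induction hy using Submodule.span_induction with
        | mem y hy => exact h y hy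
        | zero => simp
        | add y z _ _ hy hz => simp [inner_add_left, hy, hz]
        | smul c y _ hy => simp [inner_smul_left, hy]

lemma ContinuousLinearMap.mul_comp_adjoint_eq_iff (hV : V† ∘L V = 1) {B C : K →L[ℂ] K} :
    B * (V ∘L V†) = C * (V ∘L V†) ↔ ∀ x, B (V x) = C (V x) := by
  refine ⟨fun h x => ?_, fun h => ext fun y => h ((V†) y)⟩
  simpa [← comp_apply (V†) V, hV] using congr($h (V x))

lemma IsStarProjection.mul_mul_comp_adjoint_eq_iff (hP : IsStarProjection P)
    (hrange : LinearMap.range (P : K →ₗ[ℂ] K) = (Submodule.span ℂ S).topologicalClosure)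
    (hV : V† ∘L V = 1) (hPV : P * (V ∘L V†) = V ∘L V†) (T : K →L[ℂ] K) :
    P * T * (V ∘L V†) = (V ∘L V†) * T * (V ∘L V†) ↔
      ∀ x, ∀ y ∈ S, ⟪y, T (V x)⟫_ℂ = ⟪y, V ((V†) (T (V x)))⟫_ℂ := by
  rw [mul_comp_adjoint_eq_iff hV]
  exact forall_congr' fun x => hP.apply_eq_iff_forall_inner_eq hrange congr($hPV (T (V x)))

end Hilbert

def CPInstrument.IsDecomposable {X A H : Type*} [MeasurableSpace X] [NormedRing A] [StarRing A]
    [NormedAlgebra ℂ A] [NormedAddCommGroup H] [InnerProductSpace ℂ H]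
    (J : CPInstrument X A H) : Prop :=
  ∀ (s : Set X) (a : A), MeasurableSet s → J.toFun s a = J.toFun Set.univ a * J.toFun s 1

namespace IsMinimalBiDilation

variable {X A H K : Type*} [MeasurableSpace X] [NormedRing A] [StarRing A] [NormedAlgebra ℂ A]
  [NormedAddCommGroup H] [InnerProductSpace ℂ H] [CompleteSpace H]
  [NormedAddCommGroup K] [InnerProductSpace ℂ K] [CompleteSpace K]
  {J : CPInstrument X A H} {π : A →⋆ₐ[ℂ] (K →L[ℂ] K)} {E : Set X → K →L[ℂ] K} {V : H →L[ℂ] K}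
  {P : K →L[ℂ] K}

lemma mul_self_comp_adjoint_of_range_eq_span_rep (hP : IsStarProjection P)
    (hrange : LinearMap.range (P : K →ₗ[ℂ] K) =
      (Submodule.span ℂ {y : K | ∃ (a : A) (h : H), y = π a (V h)}).topologicalClosure) :
    P * (V ∘L V†) = V ∘L V† :=
  hP.mul_self_comp_adjoint_of_forall_mem hrange fun x => ⟨1, x, by simp⟩

lemma mul_self_comp_adjoint_of_range_eq_span_pvm (hdil : IsMinimalBiDilation J π E V)
    (hP : IsStarProjection P)
    (hrange : LinearMap.range (P : K →ₗ[ℂ] K) =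
      (Submodule.span ℂ {y : K | ∃ (s : Set X) (h : H),
        MeasurableSet s ∧ y = E s (V h)}).topologicalClosure) :
    P * (V ∘L V†) = V ∘L V† :=
  hP.mul_self_comp_adjoint_of_forall_mem hrange fun x =>
    ⟨Set.univ, x, .univ, by simp [hdil.pvm.map_univ]⟩

lemma toFun_apply (hdil : IsMinimalBiDilation J π E V) {s : Set X} (hs : MeasurableSet s)
    (a : A) (x : H) : J.toFun s a x = (V†) (π a (E s (V x))) := by
  simp [hdil.dilation s a hs]

lemma toFun_univ_apply (hdil : IsMinimalBiDilation J π E V) (a : A) (x : H) :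
    J.toFun Set.univ a x = (V†) (π a (V x)) := by
  simp [hdil.toFun_apply MeasurableSet.univ, hdil.pvm.map_univ]

lemma toFun_one_apply (hdil : IsMinimalBiDilation J π E V) {s : Set X} (hs : MeasurableSet s)
    (x : H) : J.toFun s 1 x = (V†) (E s (V x)) := by
  simp [hdil.toFun_apply hs]

lemma adjoint_comp_self (hdil : IsMinimalBiDilation J π E V) (hu : J.IsUnital) :
    V† ∘L V = 1 := by
  ext x
  simpa [hdil.toFun_univ_apply] using congr($hu x)

lemma toFun_star (hdil : IsMinimalBiDilation J π E V) {s : Set X} (hs : MeasurableSet s)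
    (a : A) : J.toFun s (star a) = star (J.toFun s a) := by
  rw [hdil.dilation s a hs, hdil.dilation s (star a) hs, star_eq_adjoint, adjoint_comp,
    adjoint_comp, adjoint_adjoint, ← star_eq_adjoint, star_mul,
    (hdil.pvm.selfAdjoint s hs).star_eq, ← map_star, hdil.commutes s _ hs,
    ContinuousLinearMap.comp_assoc]

lemma isDecomposable_iff_forall_eq_mul_univ (hdil : IsMinimalBiDilation J π E V) :
    J.IsDecomposable ↔ ∀ (s : Set X) (a : A), MeasurableSet s →
      J.toFun s a = J.toFun s 1 * J.toFun Set.univ a := by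
  have hstar : ∀ s, MeasurableSet s → ∀ a,
      (J.toFun s (star a) = J.toFun Set.univ (star a) * J.toFun s 1 ↔
        J.toFun s a = J.toFun s 1 * J.toFun Set.univ a) := by
    intro s hs a
    have hself : J.toFun s 1 = star (J.toFun s 1) := by simpa using hdil.toFun_star hs 1
    rw [hdil.toFun_star hs, hdil.toFun_star .univ]
    conv_lhs => rw [hself, ← star_mul, star_inj]
  refine forall_congr' fun s => ⟨fun h a hs => (hstar s hs a).1 (h _ hs), fun h a hs => ?_⟩
  simpa using (hstar s hs (star a)).2 (h _ hs)

lemma isDecomposable_iff_forall_mul_pvm_mul_eq (hdil : IsMinimalBiDilation J π E V)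
    (hu : J.IsUnital) (hP : IsStarProjection P)
    (hrange : LinearMap.range (P : K →ₗ[ℂ] K) =
      (Submodule.span ℂ {y : K | ∃ (a : A) (h : H), y = π a (V h)}).topologicalClosure) :
    J.IsDecomposable ↔ ∀ s, MeasurableSet s →
      P * E s * (V ∘L V†) = (V ∘L V†) * E s * (V ∘L V†) := by
  have hπ : ∀ a y z, ⟪π a y, z⟫_ℂ = ⟪y, π (star a) z⟫_ℂ := fun a y z => by
    rw [← adjoint_inner_left, ← star_eq_adjoint, ← map_star, star_star]
  refine forall_congr' fun s => forall_comm.trans (imp_congr_right fun hs => ?_)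
  rw [hP.mul_mul_comp_adjoint_eq_iff hrange (hdil.adjoint_comp_self hu)
    (mul_self_comp_adjoint_of_range_eq_span_rep hP hrange)]
  simp only [Set.mem_ofPred_eq, forall_exists_index, forall_comm (α := K), forall_eq, hπ,
    ← adjoint_inner_right, ← hdil.toFun_apply hs, ← hdil.toFun_univ_apply,
    ← hdil.toFun_one_apply hs]
  refine star_involutive.surjective.forall.trans ⟨fun h x a v => by rw [h, mul_apply_eq_comp],
    fun h a => ext fun x => ext_inner_left ℂ fun v => by rw [h x a v, mul_apply_eq_comp]⟩

lemma isDecomposable_iff_forall_mul_rep_mul_eq (hdil : IsMinimalBiDilation J π E V)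
    (hu : J.IsUnital) (hP : IsStarProjection P)
    (hrange : LinearMap.range (P : K →ₗ[ℂ] K) =
      (Submodule.span ℂ {y : K | ∃ (s : Set X) (h : H),
        MeasurableSet s ∧ y = E s (V h)}).topologicalClosure) :
    J.IsDecomposable ↔ ∀ a, P * π a * (V ∘L V†) = (V ∘L V†) * π a * (V ∘L V†) := by
  have hE : ∀ s, MeasurableSet s → ∀ h z, ⟪E s (V h), z⟫_ℂ = ⟪h, (V†) (E s z)⟫_ℂ :=
    fun s hs h z => by
      rw [← adjoint_inner_right (E s), ← star_eq_adjoint, (hdil.pvm.selfAdjoint s hs).star_eq,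
        adjoint_inner_right]
  rw [hdil.isDecomposable_iff_forall_eq_mul_univ, forall_comm]
  refine forall_congr' fun a => ?_
  rw [hP.mul_mul_comp_adjoint_eq_iff hrange (hdil.adjoint_comp_self hu)
    (hdil.mul_self_comp_adjoint_of_range_eq_span_pvm hP hrange)]
  simp only [Set.mem_ofPred_eq, forall_exists_index, and_imp, forall_comm (α := K), forall_eq]
  have hcomm : ∀ s, MeasurableSet s → ∀ z, E s (π a z) = π a (E s z) :=
    fun s hs z => congr($(hdil.commutes s a hs) z)
  refine ⟨fun h x s v hs => ?_, fun h s hs => ext fun x => ext_inner_left ℂ fun v => ?_⟩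
  · rw [hE s hs, hE s hs, hcomm s hs, ← hdil.toFun_apply hs, h s hs, mul_apply_eq_comp,
      hdil.toFun_one_apply hs, hdil.toFun_univ_apply]
  · simpa [hE s hs, hcomm s hs, ← hdil.toFun_apply hs, ← hdil.toFun_univ_apply,
      ← hdil.toFun_one_apply hs] using h x s v hs

end IsMinimalBiDilation

theorem CPInstrument.decomposable_iff_general
    {X A H K : Type*} [MeasurableSpace X]
    [NormedRing A] [StarRing A] [NormedAlgebra ℂ A]
    [NormedAddCommGroup H] [InnerProductSpace ℂ H] [CompleteSpace H]
    [NormedAddCommGroup K] [InnerProductSpace ℂ K] [CompleteSpace K]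
    (J : CPInstrument X A H) (hu : J.IsUnital)
    (π : A →⋆ₐ[ℂ] (K →L[ℂ] K)) (E : Set X → K →L[ℂ] K) (V : H →L[ℂ] K)
    (hdil : IsMinimalBiDilation J π E V)
    (P₁ P₂ : K →L[ℂ] K)
    (hP₁sa : IsSelfAdjoint P₁) (hP₁idem : P₁ * P₁ = P₁)
    (hP₁range : LinearMap.range (P₁ : K →ₗ[ℂ] K) =
      (Submodule.span ℂ {y : K | ∃ (a : A) (h : H), y = π a (V h)}).topologicalClosure)
    (hP₂sa : IsSelfAdjoint P₂) (hP₂idem : P₂ * P₂ = P₂)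
    (hP₂range : LinearMap.range (P₂ : K →ₗ[ℂ] K) =
      (Submodule.span ℂ {y : K | ∃ (s : Set X) (h : H),
        MeasurableSet s ∧ y = E s (V h)}).topologicalClosure) :
    ((∀ (s : Set X) (a : A), MeasurableSet s →
        J.toFun s a = J.toFun Set.univ a * J.toFun s 1) ↔
      (∀ s : Set X, MeasurableSet s →
        P₁ * E s * P₁ * (V.comp (ContinuousLinearMap.adjoint V))
          = (V.comp (ContinuousLinearMap.adjoint V)) * (P₁ * E s * P₁)
              * (V.comp (ContinuousLinearMap.adjoint V)) ∧
        (V.comp (ContinuousLinearMap.adjoint V)) * (P₁ * E s * P₁)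
            * (V.comp (ContinuousLinearMap.adjoint V))
          = (V.comp (ContinuousLinearMap.adjoint V)) * (P₁ * E s * P₁))) ∧
    ((∀ (s : Set X) (a : A), MeasurableSet s →
        J.toFun s a = J.toFun Set.univ a * J.toFun s 1) ↔
      (∀ a : A,
        P₂ * π a * P₂ * (V.comp (ContinuousLinearMap.adjoint V))
          = (V.comp (ContinuousLinearMap.adjoint V)) * (P₂ * π a * P₂)
              * (V.comp (ContinuousLinearMap.adjoint V)) ∧
        (V.comp (ContinuousLinearMap.adjoint V)) * (P₂ * π a * P₂)
            * (V.comp (ContinuousLinearMap.adjoint V))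
          = (V.comp (ContinuousLinearMap.adjoint V)) * π a * P₂)) := by
  have hP₁ : IsStarProjection P₁ := ⟨hP₁idem, hP₁sa⟩
  have hP₂ : IsStarProjection P₂ := ⟨hP₂idem, hP₂sa⟩
  have hQ : IsSelfAdjoint (V ∘L V†) := (isPositive_self_comp_adjoint V).isSelfAdjoint
  have hP₁Q := IsMinimalBiDilation.mul_self_comp_adjoint_of_range_eq_span_rep hP₁ hP₁range
  have hP₂Q := hdil.mul_self_comp_adjoint_of_range_eq_span_pvm hP₂ hP₂range
  exact ⟨(hdil.isDecomposable_iff_forall_mul_pvm_mul_eq hu hP₁ hP₁range).trans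
      (forall₂_congr fun s hs => (compression_eq_iff_of_isSelfAdjoint hP₁sa hQ hP₁Q
        (hdil.pvm.selfAdjoint s hs)).symm),
    (hdil.isDecomposable_iff_forall_mul_rep_mul_eq hu hP₂ hP₂range).trans
      (forall_compression_eq_iff π (map_star π) hP₂sa hQ hP₂Q).symm⟩

/-- **Characterization of decomposable instruments.** Let `ℐ` be a unital CP instrument
with minimal bi-dilation `(𝒦, π, E, V)`, and let `P₁`, `P₂` be the orthogonal
projections onto `[π(𝒜)Vℋ]` and `[E(𝒪(X))Vℋ]`. Then `ℐ` is decomposable iff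
`P₁E(A)P₁VV* = VV*P₁E(A)P₁VV* = VV*P₁E(A)P₁` for all `A`, iff
`P₂π(a)P₂VV* = VV*P₂π(a)P₂VV* = VV*π(a)P₂` for all `a`. -/
theorem CPInstrument.decomposable_iff
    {X A H K : Type*} [MeasurableSpace X]
    [NormedRing A] [StarRing A] [CStarRing A] [NormedAlgebra ℂ A] [StarModule ℂ A]
    [CompleteSpace A] [NormedAddCommGroup H] [InnerProductSpace ℂ H] [CompleteSpace H]
    [NormedAddCommGroup K] [InnerProductSpace ℂ K] [CompleteSpace K]
    (J : CPInstrument X A H) (hu : J.IsUnital)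
    (π : A →⋆ₐ[ℂ] (K →L[ℂ] K)) (E : Set X → K →L[ℂ] K) (V : H →L[ℂ] K)
    (hdil : IsMinimalBiDilation J π E V)
    (P₁ P₂ : K →L[ℂ] K)
    (hP₁sa : IsSelfAdjoint P₁) (hP₁idem : P₁ * P₁ = P₁)
    (hP₁range : LinearMap.range (P₁ : K →ₗ[ℂ] K) =
      (Submodule.span ℂ {y : K | ∃ (a : A) (h : H), y = π a (V h)}).topologicalClosure)
    (hP₂sa : IsSelfAdjoint P₂) (hP₂idem : P₂ * P₂ = P₂)
    (hP₂range : LinearMap.range (P₂ : K →ₗ[ℂ] K) =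
      (Submodule.span ℂ {y : K | ∃ (s : Set X) (h : H),
        MeasurableSet s ∧ y = E s (V h)}).topologicalClosure) :
    ((∀ (s : Set X) (a : A), MeasurableSet s →
        J.toFun s a = J.toFun Set.univ a * J.toFun s 1) ↔
      (∀ s : Set X, MeasurableSet s →
        P₁ * E s * P₁ * (V.comp (ContinuousLinearMap.adjoint V))
          = (V.comp (ContinuousLinearMap.adjoint V)) * (P₁ * E s * P₁)
              * (V.comp (ContinuousLinearMap.adjoint V)) ∧
        (V.comp (ContinuousLinearMap.adjoint V)) * (P₁ * E s * P₁)
            * (V.comp (ContinuousLinearMap.adjoint V))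
          = (V.comp (ContinuousLinearMap.adjoint V)) * (P₁ * E s * P₁))) ∧
    ((∀ (s : Set X) (a : A), MeasurableSet s →
        J.toFun s a = J.toFun Set.univ a * J.toFun s 1) ↔
      (∀ a : A,
        P₂ * π a * P₂ * (V.comp (ContinuousLinearMap.adjoint V))
          = (V.comp (ContinuousLinearMap.adjoint V)) * (P₂ * π a * P₂)
              * (V.comp (ContinuousLinearMap.adjoint V)) ∧
        (V.comp (ContinuousLinearMap.adjoint V)) * (P₂ * π a * P₂)
            * (V.comp (ContinuousLinearMap.adjoint V))
          = (V.comp (ContinuousLinearMap.adjoint V)) * π a * P₂)) :=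
  CPInstrument.decomposable_iff_general J hu π E V hdil P₁ P₂ hP₁sa hP₁idem hP₁range hP₂sa hP₂idem
    hP₂range
end
end

section
/- (Ozawa) Let ℐ : 𝒪(X) → CP(𝒜, B(ℋ)) be a unital CP instrument. If either the CP marginal φ_ℐ is a *-homomorphism or the POVM marginal μ_ℐ is a projection-valued (spectral) measure, then ℐ is decomposable, i.e. ℐ(A)(a) = φ_ℐ(a)μ_ℐ(A) for all a ∈ 𝒜 and A ∈ 𝒪(X). -/
open scoped InnerProductSpace ComplexOrder
open Function

noncomputable section

/-!
For a completely positive `Ψ`, the Gram sums `∑ ⟪hᵢ, Ψ(aᵢ* aⱼ) hⱼ⟫` are nonnegative, so a family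
with vanishing Gram sum is orthogonal, in the Cauchy–Schwarz sense, to every other pair `(b, k)`.
If `φ_ℐ` is a *-homomorphism, its Gram sum at `(a*, 1; h, -φ_ℐ(a*) h)` vanishes, hence so does
that of `ℐ(s)`, which is dominated by `φ_ℐ = ℐ(s) + ℐ(sᶜ)`; orthogonality to `(1, k)` then reads
`ℐ(s)(a) = φ_ℐ(a) ℐ(s)(1)`. If `μ_ℐ` is projection valued, then `(1; (1 - μ(s)) y)` has
vanishing Gram sum for `ℐ(s)`, so `ℐ(s)(a) = ℐ(s)(a) μ(s)`; as `μ(s) + μ(sᶜ) = 1` this also gives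
`ℐ(sᶜ)(a) μ(s) = 0`, and `φ_ℐ(a) μ(s) = ℐ(s)(a)` follows from finite additivity.
-/

theorem Complex.eq_zero_of_forall_ofReal_mul_add_sq_mul_nonneg {z p : ℂ}
    (h : ∀ t : ℝ, 0 ≤ (t : ℂ) * z + (t : ℂ) ^ 2 * p) : z = 0 := by
  have hre : ∀ t : ℝ, 0 ≤ p.re * (t * t) + z.re * t + 0 := fun t => by
    have := (Complex.nonneg_iff.mp (h t)).1
    simp only [← Complex.ofReal_pow, Complex.add_re, Complex.re_ofReal_mul] at this
    linarith
  have him : ∀ t : ℝ, t * z.im + t ^ 2 * p.im = 0 := fun t => by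
    have := (Complex.nonneg_iff.mp (h t)).2
    simp only [← Complex.ofReal_pow, Complex.add_im, Complex.im_ofReal_mul] at this
    linarith
  have hre0 : z.re ^ 2 ≤ 0 := by simpa [discrim] using discrim_le_zero hre
  have him0 : z.im = 0 := by linarith [him 1, him (-1)]
  exact Complex.ext (pow_eq_zero_iff two_ne_zero |>.mp (le_antisymm hre0 (sq_nonneg _))) him0

theorem Complex.eq_zero_and_eq_zero_of_forall_quadratic_nonneg {α β p : ℂ}
    (h : ∀ c : ℂ, 0 ≤ starRingEnd ℂ c * α + c * β + starRingEnd ℂ c * c * p) :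
    α = 0 ∧ β = 0 := by
  have hsum : α + β = 0 := by
    refine Complex.eq_zero_of_forall_ofReal_mul_add_sq_mul_nonneg (p := p) fun t => ?_
    convert h t using 1
    rw [Complex.conj_ofReal]
    ring
  have hdiff : Complex.I * (β - α) = 0 := by
    refine Complex.eq_zero_of_forall_ofReal_mul_add_sq_mul_nonneg (p := p) fun t => ?_
    convert h (t * Complex.I) using 1
    simp only [map_mul, Complex.conj_ofReal, Complex.conj_I]
    linear_combination ((t : ℂ) ^ 2 * p) * Complex.I_sq
  have hdiff' : β - α = 0 := (mul_eq_zero.mp hdiff).resolve_left Complex.I_ne_zero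
  exact ⟨by linear_combination (hsum - hdiff') / 2, by linear_combination (hsum + hdiff') / 2⟩

namespace IsCompletelyPositive

variable {A H : Type*} [NormedRing A] [StarRing A] [NormedAlgebra ℂ A]
  [NormedAddCommGroup H] [InnerProductSpace ℂ H] {Ψ : A →ₗ[ℂ] (H →L[ℂ] H)}

theorem sum_inner_eq_zero_of_gram_eq_zero (hΨ : IsCompletelyPositive Ψ) {n : ℕ}
    (a : Fin n → A) (h : Fin n → H)
    (hgram : ∑ i, ∑ j, ⟪h i, Ψ (star (a i) * a j) (h j)⟫_ℂ = 0) (b : A) (k : H) :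
    ∑ j, ⟪k, Ψ (star b * a j) (h j)⟫_ℂ = 0 ∧ ∑ i, ⟪h i, Ψ (star (a i) * b) k⟫_ℂ = 0 := by
  refine Complex.eq_zero_and_eq_zero_of_forall_quadratic_nonneg
    (p := ⟪k, Ψ (star b * b) k⟫_ℂ) fun c => ?_
  have hpos := hΨ (n + 1) (Fin.cons b a) (Fin.cons (c • k) h)
  simp only [Fin.sum_univ_succ, Fin.cons_zero, Fin.cons_succ, map_smul, inner_smul_left,
    inner_smul_right, Finset.sum_add_distrib, hgram] at hpos
  convert hpos using 1
  simp only [Finset.mul_sum]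
  ring

theorem map_eq_mul_map_one_of_dominated [CompleteSpace H] {φ : A →ₗ[ℂ] (H →L[ℂ] H)}
    (hΨ : IsCompletelyPositive Ψ) (hφΨ : IsCompletelyPositive (φ - Ψ))
    (hmul : ∀ a b, φ (a * b) = φ a * φ b) (hstar : ∀ a, φ (star a) = star (φ a))
    (hone : φ 1 = 1) (a : A) :
    Ψ a = φ a * Ψ 1 := by
  ext k
  refine ext_inner_left ℂ fun h => ?_
  let v : Fin 2 → A := ![star a, 1]
  let w : Fin 2 → H := ![h, -φ (star a) h]
  have hgram_φ : ∑ i, ∑ j, ⟪w i, φ (star (v i) * v j) (w j)⟫_ℂ = 0 := by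
    simp only [v, w, Fin.sum_univ_two, Matrix.cons_val_zero, Matrix.cons_val_one, star_one,
      one_mul, mul_one, map_neg, inner_neg_left, inner_neg_right, hone, hmul (star (star a)),
      one_apply_eq_self, mul_apply_eq_comp]
    ring
  have hgram_Ψ : ∑ i, ∑ j, ⟪w i, Ψ (star (v i) * v j) (w j)⟫_ℂ = 0 := by
    refine le_antisymm ?_ (hΨ 2 v w)
    simpa only [LinearMap.sub_apply, sub_apply, inner_sub_right, Finset.sum_sub_distrib,
      hgram_φ, zero_sub, neg_nonneg] using hφΨ 2 v w
  have horth := (hΨ.sum_inner_eq_zero_of_gram_eq_zero v w hgram_Ψ 1 k).2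
  simp only [v, w, Fin.sum_univ_two, Matrix.cons_val_zero, Matrix.cons_val_one, star_one,
    star_star, mul_one, inner_neg_left, hstar, ContinuousLinearMap.star_eq_adjoint,
    ContinuousLinearMap.adjoint_inner_left] at horth
  rw [mul_apply_eq_comp]
  linear_combination horth

theorem map_mul_map_one_of_isIdempotentElem (hΨ : IsCompletelyPositive Ψ)
    (hP : IsIdempotentElem (Ψ 1)) (b : A) :
    Ψ b * Ψ 1 = Ψ b := by
  ext y
  refine ext_inner_left ℂ fun x => ?_
  have hker : Ψ 1 (y - Ψ 1 y) = 0 := by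
    rw [map_sub, ← mul_apply_eq_comp, hP.eq, sub_self]
  have hgram : ∑ i : Fin 1, ∑ j : Fin 1,
      ⟪y - Ψ 1 y, Ψ (star (1 : A) * 1) (y - Ψ 1 y)⟫_ℂ = 0 := by
    simp [hker]
  have horth := (hΨ.sum_inner_eq_zero_of_gram_eq_zero (fun _ => 1) (fun _ => y - Ψ 1 y) hgram
    (star b) x).1
  simp only [Fin.sum_univ_one, star_star, mul_one, map_sub, inner_sub_right] at horth
  rw [mul_apply_eq_comp]
  linear_combination -horth

end IsCompletelyPositive

namespace CPInstrument

variable {X A H : Type*} [MeasurableSpace X] [NormedRing A] [StarRing A] [NormedAlgebra ℂ A]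
  [NormedAddCommGroup H] [InnerProductSpace ℂ H] (J : CPInstrument X A H)

open Classical in
def toComplexMeasure (a : A) (h k : H) : MeasureTheory.ComplexMeasure X where
  measureOf' s := if MeasurableSet s then ⟪h, J.toFun s a k⟫_ℂ else 0
  empty' := by
    have hsum := J.countably_additive a h k (fun _ => ∅) (fun _ => .empty)
      fun _ _ _ => Set.disjoint_empty _
    rw [Set.iUnion_empty] at hsum
    simpa using summable_const_iff _ |>.mp hsum.summable
  not_measurable' _ hs := if_neg hs
  m_iUnion' s hs hd := by
    simpa only [hs, MeasurableSet.iUnion hs, if_true] using J.countably_additive a h k s hs hd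

theorem toFun_univ_eq_add_compl {s : Set X} (hs : MeasurableSet s) (a : A) :
    J.toFun Set.univ a = J.toFun s a + J.toFun sᶜ a := by
  ext k
  refine ext_inner_left ℂ fun h => ?_
  have := (J.toComplexMeasure a h k).of_union disjoint_compl_right hs hs.compl
  simpa [toComplexMeasure, hs, hs.compl, inner_add_right] using this

end CPInstrument

theorem CPInstrument.decomposable_of_marginal_spectral_general
    {X A H : Type*} [MeasurableSpace X]
    [NormedRing A] [StarRing A] [NormedAlgebra ℂ A]
    [NormedAddCommGroup H] [InnerProductSpace ℂ H] [CompleteSpace H]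
    (J : CPInstrument X A H) (hu : J.IsUnital)
    (hmarg : ((∀ a b : A, J.toFun Set.univ (a * b) = J.toFun Set.univ a * J.toFun Set.univ b) ∧
        (∀ a : A, J.toFun Set.univ (star a) = star (J.toFun Set.univ a))) ∨
      (∀ s : Set X, MeasurableSet s → IsSelfAdjoint (J.toFun s 1) ∧
        (J.toFun s 1) * (J.toFun s 1) = J.toFun s 1)) :
    ∀ (s : Set X) (a : A), MeasurableSet s →
      J.toFun s a = J.toFun Set.univ a * J.toFun s 1 := by
  intro s a hs
  have hadd := J.toFun_univ_eq_add_compl hs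
  rcases hmarg with ⟨hmul, hstar⟩ | hproj
  · have hdom : J.toFun Set.univ - J.toFun s = J.toFun sᶜ :=
      LinearMap.ext fun b => by rw [LinearMap.sub_apply, hadd, add_sub_cancel_left]
    exact (J.cp s hs).map_eq_mul_map_one_of_dominated (hdom ▸ J.cp sᶜ hs.compl) hmul hstar hu a
  · have hidem {t : Set X} (ht : MeasurableSet t) (b : A) :
        J.toFun t b * J.toFun t 1 = J.toFun t b :=
      (J.cp t ht).map_mul_map_one_of_isIdempotentElem (hproj t ht).2 b
    have hcompl : J.toFun s 1 = 1 - J.toFun sᶜ 1 := by rw [← hu, hadd, add_sub_cancel_right]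
    calc J.toFun s a
        = J.toFun s a * J.toFun s 1 + J.toFun sᶜ a * (1 - J.toFun sᶜ 1) := by
          rw [mul_sub, mul_one, hidem hs, hidem hs.compl, sub_self, add_zero]
      _ = J.toFun Set.univ a * J.toFun s 1 := by rw [hadd, add_mul, hcompl]

/-- **(Ozawa)** A unital CP instrument is decomposable (`ℐ(A)(a) = φ_ℐ(a) μ_ℐ(A)`)
whenever its CP marginal `φ_ℐ` is a *-homomorphism or its POVM marginal `μ_ℐ` is a
projection-valued measure. -/
theorem CPInstrument.decomposable_of_marginal_spectral
    {X A H : Type*} [MeasurableSpace X]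
    [NormedRing A] [StarRing A] [CStarRing A] [NormedAlgebra ℂ A] [StarModule ℂ A]
    [CompleteSpace A] [NormedAddCommGroup H] [InnerProductSpace ℂ H] [CompleteSpace H]
    (J : CPInstrument X A H) (hu : J.IsUnital)
    (hmarg : ((∀ a b : A, J.toFun Set.univ (a * b) = J.toFun Set.univ a * J.toFun Set.univ b) ∧
        (∀ a : A, J.toFun Set.univ (star a) = star (J.toFun Set.univ a))) ∨
      (∀ s : Set X, MeasurableSet s → IsSelfAdjoint (J.toFun s 1) ∧
        (J.toFun s 1) * (J.toFun s 1) = J.toFun s 1)) :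
    ∀ (s : Set X) (a : A), MeasurableSet s →
      J.toFun s a = J.toFun Set.univ a * J.toFun s 1 :=
  CPInstrument.decomposable_of_marginal_spectral_general J hu hmarg
end
end

section
/- Let ℋ be a finite-dimensional complex Hilbert space. Then every C*-extreme point of the set I_ℋ(X, 𝒜) of unital CP instruments on (X, 𝒪(X)) with values in CP(𝒜, B(ℋ)) is an extreme point of the convex set I_ℋ(X, 𝒜). -/
open scoped InnerProductSpace ComplexOrder
open Function

noncomputable section

/-!
Writing `ℐ = t ℐ₁ + (1 - t) ℐ₂` as the C*-convex combination with coefficients `√t • 1` and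
`√(1 - t) • 1`, C*-extremality makes each `ℐᵢ` a unitary conjugate `uᵢ* ℐ uᵢ` of `ℐ`. Unitary
conjugation preserves the Hilbert–Schmidt norm, which in finite dimensions is strictly convex, so
each value `x = ℐ(s)(a)` is a proper convex combination of two operators with the same
Hilbert–Schmidt norm as `x`, and must coincide with both.
-/

open ContinuousLinearMap

namespace OrthonormalBasis

variable {𝕜 E F ι κ : Type*} [RCLike 𝕜] [NormedAddCommGroup E] [InnerProductSpace 𝕜 E]
  [NormedAddCommGroup F] [InnerProductSpace 𝕜 F] [CompleteSpace E] [CompleteSpace F]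
  [Fintype ι] [Fintype κ]

theorem sum_norm_sq_apply_eq_sum_norm_sq_adjoint_apply (b : OrthonormalBasis ι 𝕜 E)
    (c : OrthonormalBasis κ 𝕜 F) (a : E →L[𝕜] F) :
    ∑ i, ‖a (b i)‖ ^ 2 = ∑ j, ‖adjoint a (c j)‖ ^ 2 := by
  simp_rw [← c.sum_sq_norm_inner_right (a _), ← b.sum_sq_norm_inner_left (adjoint a _),
    adjoint_inner_left]
  exact Finset.sum_comm

theorem sum_norm_sq_apply_eq [FiniteDimensional 𝕜 F] (b : OrthonormalBasis ι 𝕜 E)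
    (b' : OrthonormalBasis κ 𝕜 E) (a : E →L[𝕜] F) :
    ∑ i, ‖a (b i)‖ ^ 2 = ∑ j, ‖a (b' j)‖ ^ 2 := by
  rw [b.sum_norm_sq_apply_eq_sum_norm_sq_adjoint_apply (stdOrthonormalBasis 𝕜 F),
    b'.sum_norm_sq_apply_eq_sum_norm_sq_adjoint_apply (stdOrthonormalBasis 𝕜 F)]

end OrthonormalBasis

theorem eq_and_eq_of_norm_eq_of_eq_combo {E : Type*} [NormedAddCommGroup E] [NormedSpace ℝ E]
    [StrictConvexSpace ℝ E] {x y z : E} {t : ℝ} (ht₀ : 0 < t) (ht₁ : t < 1)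
    (hy : ‖y‖ = ‖x‖) (hz : ‖z‖ = ‖x‖) (hx : x = t • y + (1 - t) • z) : y = x ∧ z = x := by
  have hyz : y = z := by
    by_contra hne
    have hlt := norm_combo_lt_of_ne hy.le hz.le hne ht₀ (sub_pos.2 ht₁) (add_sub_cancel t 1)
    exact hlt.ne (congrArg norm hx.symm)
  subst hyz
  rw [← add_smul, add_sub_cancel, one_smul] at hx
  exact ⟨hx.symm, hx.symm⟩

section HilbertSchmidt

variable {H : Type*} [NormedAddCommGroup H] [InnerProductSpace ℂ H] [FiniteDimensional ℂ H]

variable (H) in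
/-- `‖hsColumns H a‖` is the Hilbert–Schmidt norm of `a`. -/
def hsColumns : (H →L[ℂ] H) →ₗ[ℂ] PiLp 2 (fun _ : Fin (Module.finrank ℂ H) => H) where
  toFun a := WithLp.toLp 2 fun i => a (stdOrthonormalBasis ℂ H i)
  map_add' _ _ := rfl
  map_smul' _ _ := rfl

theorem hsColumns_injective : Function.Injective (hsColumns H) := by
  rw [← LinearMap.ker_eq_bot, LinearMap.ker_eq_bot']
  intro a ha
  have hcol : ∀ i, a (stdOrthonormalBasis ℂ H i) = 0 := fun i => congrArg (· i) ha
  exact ContinuousLinearMap.coe_injective <|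
    (stdOrthonormalBasis ℂ H).toBasis.ext (by simpa using hcol)

theorem norm_sq_hsColumns (a : H →L[ℂ] H) :
    ‖hsColumns H a‖ ^ 2 = ∑ i, ‖a (stdOrthonormalBasis ℂ H i)‖ ^ 2 :=
  PiLp.norm_sq_eq_of_L2 _ _

theorem norm_hsColumns_star_mul_mul (u : unitary (H →L[ℂ] H)) (a : H →L[ℂ] H) :
    ‖hsColumns H (star (u : H →L[ℂ] H) * a * u)‖ = ‖hsColumns H a‖ := by
  refine (sq_eq_sq₀ (norm_nonneg _) (norm_nonneg _)).1 ?_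
  calc ‖hsColumns H (star (u : H →L[ℂ] H) * a * u)‖ ^ 2
      = ∑ i, ‖a ((stdOrthonormalBasis ℂ H).map (Unitary.linearIsometryEquiv u) i)‖ ^ 2 := by
        rw [norm_sq_hsColumns]
        congr! 2 with i
        exact Unitary.norm_map (star u) _
    _ = ‖hsColumns H a‖ ^ 2 := by
        rw [norm_sq_hsColumns]
        exact OrthonormalBasis.sum_norm_sq_apply_eq _ _ a

theorem eq_and_eq_of_eq_combo_star_mul_mul {x : H →L[ℂ] H} {u v : unitary (H →L[ℂ] H)}
    {t : ℝ} (ht₀ : 0 < t) (ht₁ : t < 1)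
    (hx : x = (t : ℂ) • (star (u : H →L[ℂ] H) * x * u) +
      ((1 - t : ℝ) : ℂ) • (star (v : H →L[ℂ] H) * x * v)) :
    star (u : H →L[ℂ] H) * x * u = x ∧ star (v : H →L[ℂ] H) * x * v = x := by
  -- makes the column space strictly convex over `ℝ`
  have := InnerProductSpace.toInnerProductSpaceable ℂ
    (E := PiLp 2 fun _ : Fin (Module.finrank ℂ H) => H)
  have hcols := congrArg (hsColumns H) hx
  rw [map_add, map_smul, map_smul, Complex.coe_smul, Complex.coe_smul] at hcols
  have hfixed := eq_and_eq_of_norm_eq_of_eq_combo ht₀ ht₁ (norm_hsColumns_star_mul_mul u x)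
    (norm_hsColumns_star_mul_mul v x) hcols
  exact ⟨hsColumns_injective hfixed.1, hsColumns_injective hfixed.2⟩

end HilbertSchmidt

theorem star_algebraMap_sqrt_mul_mul {B : Type*} [Ring B] [StarRing B] [Algebra ℂ B]
    [StarModule ℂ B] {r : ℝ} (hr : 0 ≤ r) (y : B) :
    star (algebraMap ℂ B √r) * y * algebraMap ℂ B √r = (r : ℂ) • y := by
  rw [← algebraMap_star_comm, Complex.star_def, Complex.conj_ofReal, mul_assoc,
    ← Algebra.commutes, ← mul_assoc, ← map_mul, ← Complex.ofReal_mul, Real.mul_self_sqrt hr,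
    ← Algebra.smul_def]

theorem CPInstrument.IsCstarExtreme.exists_unitary_of_eq_combo {X A H : Type*}
    [MeasurableSpace X] [NormedRing A] [StarRing A] [NormedAlgebra ℂ A]
    [NormedAddCommGroup H] [InnerProductSpace ℂ H] [CompleteSpace H]
    {J J₁ J₂ : CPInstrument X A H} (hJ : J.IsCstarExtreme) {t : ℝ} (h₁ : J₁.IsUnital)
    (h₂ : J₂.IsUnital) (ht₀ : 0 < t) (ht₁ : t < 1)
    (hJt : ∀ s, MeasurableSet s →
      J.toFun s = (t : ℂ) • J₁.toFun s + ((1 - t : ℝ) : ℂ) • J₂.toFun s) :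
    ∃ u₁ u₂ : unitary (H →L[ℂ] H), ∀ s, MeasurableSet s → ∀ a,
      J₁.toFun s a = star (u₁ : H →L[ℂ] H) * J.toFun s a * u₁ ∧
        J₂.toFun s a = star (u₂ : H →L[ℂ] H) * J.toFun s a * u₂ := by
  set w : Fin 2 → ℝ := ![t, 1 - t]
  have hw : ∀ i, 0 < w i := by
    intro i
    fin_cases i
    exacts [ht₀, sub_pos.2 ht₁]
  set T : Fin 2 → H →L[ℂ] H := fun i => algebraMap ℂ _ √(w i)
  have hT : ∀ i (y : H →L[ℂ] H), adjoint (T i) * y * T i = (w i : ℂ) • y := fun i =>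
    star_algebraMap_sqrt_mul_mul (hw i).le
  have hunit : ∀ i, IsUnit (T i) := fun i =>
    (isUnit_iff_ne_zero.2 (by exact_mod_cast (Real.sqrt_pos.2 (hw i)).ne')).map _
  have hsum : ∑ i, adjoint (T i) * T i = 1 := by
    have hT₁ : ∀ i, adjoint (T i) * T i = (w i : ℂ) • 1 := fun i => by rw [← hT i 1, mul_one]
    rw [Fin.sum_univ_two, hT₁, hT₁, ← add_smul]
    simp [w]
  have hdecomp : ∀ s a, MeasurableSet s →
      J.toFun s a = ∑ i, adjoint (T i) * (![J₁, J₂] i).toFun s a * T i := by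
    intro s a hs
    simp_rw [hT, Fin.sum_univ_two]
    exact LinearMap.congr_fun (hJt s hs) a
  have hconj := hJ.2 2 ![J₁, J₂] T (fun i => by fin_cases i <;> assumption) hunit hsum hdecomp
  obtain ⟨U₁, hU₁, hU₁', hJ₁⟩ := hconj 0
  obtain ⟨U₂, hU₂, hU₂', hJ₂⟩ := hconj 1
  exact ⟨⟨U₁, Unitary.mem_iff.2 ⟨hU₁, hU₁'⟩⟩, ⟨U₂, Unitary.mem_iff.2 ⟨hU₂, hU₂'⟩⟩,
    fun s hs a => ⟨hJ₁ s a hs, hJ₂ s a hs⟩⟩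

theorem CPInstrument.isExtreme_of_isCstarExtreme_general
    {X A H : Type*} [MeasurableSpace X]
    [NormedRing A] [StarRing A] [NormedAlgebra ℂ A]
    [NormedAddCommGroup H] [InnerProductSpace ℂ H] [CompleteSpace H]
    [FiniteDimensional ℂ H]
    (J : CPInstrument X A H) (hJ : J.IsCstarExtreme) :
    J.IsExtreme := by
  refine ⟨hJ.1, fun J₁ J₂ t h₁ h₂ ht₀ ht₁ hJt s hs => ?_⟩
  obtain ⟨u₁, u₂, hu⟩ := hJ.exists_unitary_of_eq_combo h₁ h₂ ht₀ ht₁ hJt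
  have hfixed (a : A) : J₁.toFun s a = J.toFun s a ∧ J₂.toFun s a = J.toFun s a := by
    rw [(hu s hs a).1, (hu s hs a).2]
    refine eq_and_eq_of_eq_combo_star_mul_mul ht₀ ht₁ ?_
    rw [← (hu s hs a).1, ← (hu s hs a).2]
    exact LinearMap.congr_fun (hJt s hs) a
  exact ⟨LinearMap.ext fun a => (hfixed a).1, LinearMap.ext fun a => (hfixed a).2⟩

/-- In finite dimensions, every C*-extreme point of the set of unital CP instruments is
an extreme point. -/
theorem CPInstrument.isExtreme_of_isCstarExtreme
    {X A H : Type*} [MeasurableSpace X]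
    [NormedRing A] [StarRing A] [CStarRing A] [NormedAlgebra ℂ A] [StarModule ℂ A]
    [CompleteSpace A] [NormedAddCommGroup H] [InnerProductSpace ℂ H] [CompleteSpace H]
    [FiniteDimensional ℂ H]
    (J : CPInstrument X A H) (hJ : J.IsCstarExtreme) :
    J.IsExtreme :=
  CPInstrument.isExtreme_of_isCstarExtreme_general J hJ
end
end
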